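/- arXiv:2407.19122 — 14 statements merged into one kernel-verified Lean document; each statement's English description precedes it below -/
import Mathlib

section
/- Let K be a field, M a K-vector space, and Q : QuadraticForm K M. For r : K and w : M set v := algebraMap K (CliffordAlgebra Q) r + ι Q w (a Clifford vector). Then v + reverse (involute v) = algebraMap K (CliffordAlgebra Q) (2*r) and v * reverse (involute v) = algebraMap K (CliffordAlgebra Q) (r^2 - Q w); moreover, if v does not lie in the range of algebraMap K (CliffordAlgebra Q), then minpoly K v = X^2 - C (2*r) * X + C (r^2 - Q w). -/
open Polynomial

theorem clifford_vector_minpoly {K M : Type*} [Field K] [AddCommGroup M] [Module K M]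
    (Q : QuadraticForm K M) (r : K) (w : M)
    (v : CliffordAlgebra Q)
    (hv : v = algebraMap K (CliffordAlgebra Q) r + CliffordAlgebra.ι Q w) :
    v + CliffordAlgebra.reverse (CliffordAlgebra.involute v)
        = algebraMap K (CliffordAlgebra Q) (2 * r) ∧
    v * CliffordAlgebra.reverse (CliffordAlgebra.involute v)
        = algebraMap K (CliffordAlgebra Q) (r ^ 2 - Q w) ∧
    (v ∉ Set.range (algebraMap K (CliffordAlgebra Q)) →
      minpoly K v = X ^ 2 - C (2 * r) * X + C (r ^ 2 - Q w)) := by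
  have hconj : CliffordAlgebra.reverse (CliffordAlgebra.involute v)
      = algebraMap K (CliffordAlgebra Q) r - CliffordAlgebra.ι Q w := by
    subst hv
    simp [sub_eq_add_neg]
  have htr : v + CliffordAlgebra.reverse (CliffordAlgebra.involute v)
      = algebraMap K (CliffordAlgebra Q) (2 * r) := by
    rw [hconj, hv, two_mul, map_add]
    abel
  have hcomm : algebraMap K (CliffordAlgebra Q) r * CliffordAlgebra.ι Q w
      = CliffordAlgebra.ι Q w * algebraMap K (CliffordAlgebra Q) r := by
    rw [Algebra.commutes]
  have hnr : v * CliffordAlgebra.reverse (CliffordAlgebra.involute v)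
      = algebraMap K (CliffordAlgebra Q) (r ^ 2 - Q w) := by
    rw [hconj, hv, add_mul, mul_sub, mul_sub, CliffordAlgebra.ι_sq_scalar,
      hcomm, map_sub, ← map_mul, pow_two]
    abel
  refine ⟨htr, hnr, fun hrange => ?_⟩
  have hp : (Polynomial.aeval v) (X ^ 2 - C (2 * r) * X + C (r ^ 2 - Q w)) = 0 := by
    have hv2 : v * v = algebraMap K (CliffordAlgebra Q) (2 * r) * v
        - algebraMap K (CliffordAlgebra Q) (r ^ 2 - Q w) := by
      have : v * (v + CliffordAlgebra.reverse (CliffordAlgebra.involute v))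
          = v * algebraMap K (CliffordAlgebra Q) (2 * r) := by rw [htr]
      rw [mul_add, hnr] at this
      rw [eq_sub_iff_add_eq, Algebra.commutes, this]
    simp only [map_add, map_sub, aeval_mul, aeval_X, aeval_C, map_pow]
    rw [pow_two, hv2]
    simp only [map_sub, map_pow]
    abel
  have hnontriv : Nontrivial (CliffordAlgebra Q) := by
    by_contra h
    rw [not_nontrivial_iff_subsingleton] at h
    exact hrange ⟨0, Subsingleton.elim _ _⟩
  have hmonic : (X ^ 2 - C (2 * r) * X + C (r ^ 2 - Q w)).Monic := by
    have : X ^ 2 - C (2 * r) * X + C (r ^ 2 - Q w)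
        = X ^ 2 + (- C (2 * r) * X + C (r ^ 2 - Q w)) := by ring
    rw [this]
    apply Polynomial.monic_X_pow_add
    apply lt_of_le_of_lt (Polynomial.degree_add_le _ _)
    refine max_lt ?_ ?_
    · apply lt_of_le_of_lt (Polynomial.degree_mul_le _ _)
      calc (-C (2*r)).degree + X.degree ≤ 0 + 1 := by
            exact add_le_add ((Polynomial.degree_neg _).le.trans (Polynomial.degree_C_le))
              Polynomial.degree_X_le
        _ < 2 := by norm_num
    · exact lt_of_le_of_lt Polynomial.degree_C_le (by norm_num)
  symm
  refine minpoly.unique K v hmonic hp fun q hq hq0 => ?_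
  rw [Polynomial.degree_eq_natDegree hmonic.ne_zero]
  have hnd : (X ^ 2 - C (2 * r) * X + C (r ^ 2 - Q w)).natDegree = 2 := by
    compute_degree!
  rw [hnd, Polynomial.degree_eq_natDegree hq.ne_zero]
  by_contra hlt
  push_neg at hlt
  have h1 : q.natDegree ≤ 1 := by exact_mod_cast Nat.lt_succ_iff.mp (by exact_mod_cast hlt)
  interval_cases h : q.natDegree
  · have : q = 1 := hq.natDegree_eq_zero.mp h
    rw [this] at hq0
    simp at hq0
  · obtain ⟨c, rfl⟩ : ∃ c, q = X + C c := ⟨q.coeff 0, hq.eq_X_add_C h⟩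
    rw [map_add, aeval_X, aeval_C, add_eq_zero_iff_eq_neg, ← map_neg] at hq0
    exact hrange ⟨-c, hq0.symm⟩
end

section
/- Let K be a field, M a finite-dimensional K-vector space with n := Module.finrank K M, and Q : QuadraticForm K M. Assume CliffordAlgebra Q is a finite-dimensional K-vector space with Module.finrank K (CliffordAlgebra Q) = 2^n. Let r : K and w : M, set v := algebraMap K (CliffordAlgebra Q) r + ι Q w, and assume v is not in the range of algebraMap K (CliffordAlgebra Q). Then the characteristic polynomial of the K-linear endomorphism of CliffordAlgebra Q given by left multiplication by v equals (X^2 - C (2*r) * X + C (r^2 - Q w))^(2^(n-1)). -/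
/-!
Since `(v - r)² = Q w`, the vector `v` is annihilated by `p = X² - 2r X + (r² - Q w)`, so the
characteristic polynomial `χ` of left multiplication by `v` divides `p ^ 2ⁿ` (all its roots are
eigenvalues, hence roots of `p`). The parity involution is an algebra automorphism sending `v` to
`2r - v`, so `χ(X) = χ(2r - X)`, the dimension `2ⁿ` being even (`n ≠ 0` as `v` is not a scalar).
A monic divisor of `p ^ 2m` of degree `2m` with this symmetry is `p ^ m`: if `p` is irreducible or
a square this is forced by the degree, and if `p` has two distinct roots the symmetry swaps them,
so they have the same multiplicity in `χ`.
-/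

open Polynomial

namespace Polynomial

variable {K : Type*} [Field K]

theorem Splits.dvd_pow_natDegree {E q : K[X]} (hE : E.Monic) (hs : E.Splits)
    (h : ∀ μ ∈ E.roots, q.IsRoot μ) : E ∣ q ^ E.natDegree :=
  calc E = (E.roots.map (X - C ·)).prod := hs.eq_prod_roots_of_monic hE
    _ ∣ (E.roots.map fun _ ↦ q).prod :=
      Multiset.prod_dvd_prod_of_dvd _ _ fun μ hμ ↦ dvd_iff_isRoot.2 (h μ hμ)
    _ = q ^ E.natDegree := by
      rw [Multiset.map_const', Multiset.prod_replicate, hs.natDegree_eq_card_roots]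

theorem Monic.exists_eq_pow_of_dvd_prime_pow {E q : K[X]} (hE : E.Monic) (hq : Prime q)
    (hqm : q.Monic) {k : ℕ} (h : E ∣ q ^ k) : ∃ i ≤ k, E = q ^ i := by
  obtain ⟨i, hik, hassoc⟩ := (dvd_prime_pow hq k).1 h
  exact ⟨i, hik, eq_of_monic_of_associated hE (hqm.pow i) hassoc⟩

theorem Monic.eq_pow_of_dvd_prime_pow {E q : K[X]} (hE : E.Monic) (hq : Prime q)
    (hqm : q.Monic) {k j : ℕ} (h : E ∣ q ^ k) (hdeg : E.natDegree = j * q.natDegree) :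
    E = q ^ j := by
  obtain ⟨i, -, rfl⟩ := hE.exists_eq_pow_of_dvd_prime_pow hq hqm h
  have hq0 : 0 < q.natDegree := hqm.natDegree_pos.2 hq.ne_one
  rw [hqm.natDegree_pow] at hdeg
  rw [Nat.eq_of_mul_eq_mul_right hq0 hdeg]

theorem rootMultiplicity_comp_C_sub_X (E : K[X]) (s t : K) :
    (E.comp (C s - X)).rootMultiplicity t = E.rootMultiplicity (s - t) := by
  have h := rootMultiplicity_comp_C_mul_X_add_C E (-1) s t isUnit_one.neg
  rwa [C_neg, C_1, neg_one_mul, neg_add_eq_sub, neg_one_mul, neg_add_eq_sub] at h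

theorem eq_pow_of_dvd_pow_of_comp_C_add_sub_X_eq_of_ne {a b : K} (hab : a ≠ b) {E : K[X]}
    (hE : E.Monic) {m : ℕ} (hdeg : E.natDegree = 2 * m)
    (hdvd : E ∣ ((X - C a) * (X - C b)) ^ (2 * m)) (hsym : E.comp (C (a + b) - X) = E) :
    E = ((X - C a) * (X - C b)) ^ m := by
  obtain ⟨E₁, hfac, hndvd⟩ := exists_eq_pow_rootMultiplicity_mul_and_not_dvd E hE.ne_zero a
  set i := E.rootMultiplicity a
  have hE₁ : E₁.Monic := ((monic_X_sub_C a).pow i).of_mul_monic_left (hfac ▸ hE)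
  have hcop : IsCoprime ((X - C a) ^ (2 * m)) E₁ :=
    ((irreducible_X_sub_C a).coprime_iff_not_dvd.2 hndvd).pow_left
  have hE₁dvd : E₁ ∣ (X - C b) ^ (2 * m) := by
    refine hcop.symm.dvd_of_dvd_mul_left (dvd_trans (Dvd.intro_left _ hfac.symm) ?_)
    rwa [← mul_pow]
  obtain ⟨j, -, rfl⟩ :=
    hE₁.exists_eq_pow_of_dvd_prime_pow (prime_X_sub_C b) (monic_X_sub_C b) hE₁dvd
  have hj : E.rootMultiplicity b = j := by
    have hb : ¬((X - C a) ^ i).IsRoot b := by simp [sub_eq_zero, hab.symm]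
    rw [hfac, rootMultiplicity_mul (hfac ▸ hE.ne_zero), rootMultiplicity_X_sub_C_pow,
      rootMultiplicity_eq_zero hb, zero_add]
  have hij : i = j := by
    rw [← hj, ← hsym, rootMultiplicity_comp_C_sub_X, add_sub_cancel_right]
  have hsum : i + j = 2 * m := by
    rw [← hdeg, hfac, natDegree_mul (pow_ne_zero _ (X_sub_C_ne_zero a))
      (pow_ne_zero _ (X_sub_C_ne_zero b)), natDegree_pow, natDegree_pow, natDegree_X_sub_C,
      natDegree_X_sub_C, mul_one, mul_one]
  rw [hfac, ← hij, show i = m by omega, mul_pow]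

theorem eq_pow_of_dvd_pow_of_comp_C_sub_X_eq {s c : K} {E : K[X]} (hE : E.Monic) {m : ℕ}
    (hdeg : E.natDegree = 2 * m) (hdvd : E ∣ (X ^ 2 - C s * X + C c) ^ (2 * m))
    (hsym : E.comp (C s - X) = E) : E = (X ^ 2 - C s * X + C c) ^ m := by
  set p : K[X] := X ^ 2 - C s * X + C c
  have hp : p.Monic := by unfold p; monicity!
  have hp2 : p.natDegree = 2 := by unfold p; compute_degree!
  by_cases hroot : ∃ a, p.IsRoot a
  · obtain ⟨a, ha⟩ := hroot
    have hfac : p = (X - C a) * (X - C (s - a)) := by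
      have hc : c = a * (s - a) := by
        simp only [p, IsRoot, eval_add, eval_sub, eval_mul, eval_pow, eval_X, eval_C] at ha
        linear_combination ha
      simp only [p, hc, C_mul, C_sub]
      ring
    rw [hfac] at hdvd ⊢
    by_cases hdouble : a = s - a
    · rw [← hdouble, ← sq, ← pow_mul] at hdvd ⊢
      refine hE.eq_pow_of_dvd_prime_pow (prime_X_sub_C a) (monic_X_sub_C a) hdvd ?_
      rw [hdeg, natDegree_X_sub_C, mul_one, mul_comm]
    · refine eq_pow_of_dvd_pow_of_comp_C_add_sub_X_eq_of_ne hdouble hE hdeg hdvd ?_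
      rwa [add_sub_cancel]
  · have hirr : Irreducible p :=
      irreducible_of_degree_le_three_of_not_isRoot (by simp [hp2]) (not_exists.1 hroot)
    exact hE.eq_pow_of_dvd_prime_pow hirr.prime hp hdvd (by rw [hdeg, hp2, mul_comm])

end Polynomial

theorem Matrix.charpoly_neg {R n : Type*} [CommRing R] [Fintype n] [DecidableEq n]
    (A : Matrix n n R) : (-A).charpoly = (-1) ^ Fintype.card n * A.charpoly.comp (-X) := by
  have h : (charmatrix A).map (compRingHom (-X)) = -charmatrix (-A) := by
    ext i j : 1
    by_cases hij : i = j
    · subst hij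
      simp only [Matrix.map_apply, coe_compRingHom, Matrix.charmatrix_apply_eq, sub_comp, X_comp,
        C_comp, Matrix.neg_apply, map_neg]
      ring
    · simp [Matrix.charmatrix_apply_ne _ _ _ hij]
  rw [Matrix.charpoly, Matrix.charpoly, ← coe_compRingHom_apply, RingHom.map_det,
    RingHom.mapMatrix_apply, h, det_neg, ← mul_assoc, ← pow_add, ← two_mul, pow_mul]
  simp

namespace LinearMap

section CommRing

variable {R M : Type*} [CommRing R] [Nontrivial R] [AddCommGroup M] [Module R M]
  [Module.Free R M] [Module.Finite R M]

theorem charpoly_neg (f : Module.End R M) :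
    (-f).charpoly = (-1) ^ Module.finrank R M * f.charpoly.comp (-X) := by
  rw [charpoly, charpoly, map_neg, Matrix.charpoly_neg, Module.finrank_eq_card_chooseBasisIndex]

theorem charpoly_algebraMap_sub (f : Module.End R M) (a : R) :
    (algebraMap R (Module.End R M) a - f).charpoly =
      (-1) ^ Module.finrank R M * f.charpoly.comp (C a - X) := by
  have h : algebraMap R (Module.End R M) a - f = -f - (-a) • 1 := by
    rw [Algebra.algebraMap_eq_smul_one, neg_smul, sub_neg_eq_add, neg_add_eq_sub]
  have hX : (-X : R[X]).comp (X + C (-a)) = C a - X := by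
    rw [Polynomial.neg_comp, X_comp, C_neg]
    ring
  rw [h, charpoly_sub_smul, charpoly_neg, mul_comp, Polynomial.comp_assoc, hX]
  simp

end CommRing

theorem charpoly_mulLeft_algEquiv {R A : Type*} [CommRing R] [Ring A] [Algebra R A]
    [Module.Free R A] [Module.Finite R A] (e : A ≃ₐ[R] A) (a : A) :
    (mulLeft R (e a)).charpoly = (mulLeft R a).charpoly := by
  have h : mulLeft R (e a) = e.toLinearEquiv.conj (mulLeft R a) := by
    ext x
    simp [LinearEquiv.conj_apply]
  rw [h, LinearEquiv.charpoly_conj]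

theorem charpoly_dvd_pow_finrank_of_aeval_eq_zero {K V : Type*} [Field K] [AddCommGroup V]
    [Module K V] [FiniteDimensional K V] (f : Module.End K V) {p : K[X]}
    (hp : aeval f p = 0) : f.charpoly ∣ p ^ Module.finrank K V := by
  let L := AlgebraicClosure K
  let g := f.baseChange L
  have hg : aeval g (p.map (algebraMap K L)) = 0 := by
    rw [aeval_map_algebraMap, show g = Module.End.baseChangeHom K L V f from rfl,
      aeval_algHom_apply, hp, map_zero]
  have hdvd : g.charpoly ∣ p.map (algebraMap K L) ^ Module.finrank K V := by
    rw [← Module.finrank_baseChange (R := L) (S := K), ← g.charpoly_natDegree]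
    refine (IsAlgClosed.splits _).dvd_pow_natDegree g.charpoly_monic fun μ hμ ↦ ?_
    have hμ : Module.End.HasEigenvalue g μ :=
      (Module.End.hasEigenvalue_iff_isRoot_charpoly g μ).2 (isRoot_of_mem_roots hμ)
    exact (Module.End.isRoot_of_hasEigenvalue hμ).dvd (minpoly.dvd L g hg)
  rwa [charpoly_baseChange, ← Polynomial.map_pow,
    map_dvd_map _ (algebraMap K L).injective f.charpoly_monic] at hdvd

end LinearMap

namespace CliffordAlgebra

variable {R M : Type*} [CommRing R] [AddCommGroup M] [Module R M] (Q : QuadraticForm R M)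

theorem involute_algebraMap_add_ι (r : R) (w : M) :
    involute (algebraMap R _ r + ι Q w) = algebraMap R _ (2 * r) - (algebraMap R _ r + ι Q w) := by
  rw [map_add, AlgHom.commutes, involute_ι, map_mul, map_ofNat]
  noncomm_ring

theorem aeval_algebraMap_add_ι (r : R) (w : M) :
    aeval (algebraMap R _ r + ι Q w) (X ^ 2 - C (2 * r) * X + C (r ^ 2 - Q w)) = 0 := by
  simp only [map_add, map_sub, map_pow, map_mul, aeval_X, aeval_C, map_ofNat]
  rw [sq, add_mul, mul_add, mul_add, ι_sq_scalar, ← Algebra.commutes r (ι Q w)]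
  noncomm_ring

end CliffordAlgebra

theorem clifford_vector_charpoly_general {K M : Type*} [Field K] [AddCommGroup M] [Module K M]
    (Q : QuadraticForm K M)
    [FiniteDimensional K (CliffordAlgebra Q)]
    (hdim : Module.finrank K (CliffordAlgebra Q) = 2 ^ Module.finrank K M)
    (r : K) (w : M) (v : CliffordAlgebra Q)
    (hv : v = algebraMap K (CliffordAlgebra Q) r + CliffordAlgebra.ι Q w)
    (hvr : v ∉ Set.range (algebraMap K (CliffordAlgebra Q))) :
    LinearMap.charpoly (LinearMap.mulLeft K v) =
      (X ^ 2 - C (2 * r) * X + C (r ^ 2 - Q w)) ^ 2 ^ (Module.finrank K M - 1) := by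
  have hn : Module.finrank K M ≠ 0 := by
    intro h
    rw [h, pow_zero] at hdim
    have : Nontrivial (CliffordAlgebra Q) := Module.nontrivial_of_finrank_eq_succ hdim
    rw [← Subalgebra.bot_eq_top_iff_finrank_eq_one] at hdim
    exact hvr (Algebra.mem_bot.1 (hdim ▸ Algebra.mem_top))
  have hdim' : Module.finrank K (CliffordAlgebra Q) = 2 * 2 ^ (Module.finrank K M - 1) := by
    rw [hdim, ← pow_succ', Nat.sub_add_cancel (Nat.pos_of_ne_zero hn)]
  have hmul : ∀ u, LinearMap.mulLeft K u = Algebra.lmul K (CliffordAlgebra Q) u := fun _ ↦ rfl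
  subst hv
  refine eq_pow_of_dvd_pow_of_comp_C_sub_X_eq (LinearMap.charpoly_monic _)
    (by rw [LinearMap.charpoly_natDegree, hdim']) ?_ ?_
  · rw [← hdim']
    refine LinearMap.charpoly_dvd_pow_finrank_of_aeval_eq_zero _ ?_
    rw [hmul, aeval_algHom_apply, CliffordAlgebra.aeval_algebraMap_add_ι, map_zero]
  · have h := LinearMap.charpoly_mulLeft_algEquiv CliffordAlgebra.involuteEquiv
      (algebraMap K _ r + CliffordAlgebra.ι Q w)
    rwa [CliffordAlgebra.involuteEquiv_apply, CliffordAlgebra.involute_algebraMap_add_ι, hmul,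
      map_sub, AlgHom.commutes, ← hmul, LinearMap.charpoly_algebraMap_sub, hdim', pow_mul,
      neg_one_sq, one_pow, one_mul] at h

theorem clifford_vector_charpoly {K M : Type*} [Field K] [AddCommGroup M] [Module K M]
    [FiniteDimensional K M] (Q : QuadraticForm K M)
    [FiniteDimensional K (CliffordAlgebra Q)]
    (hdim : Module.finrank K (CliffordAlgebra Q) = 2 ^ Module.finrank K M)
    (r : K) (w : M) (v : CliffordAlgebra Q)
    (hv : v = algebraMap K (CliffordAlgebra Q) r + CliffordAlgebra.ι Q w)
    (hvr : v ∉ Set.range (algebraMap K (CliffordAlgebra Q))) :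
    LinearMap.charpoly (LinearMap.mulLeft K v) =
      (X ^ 2 - C (2 * r) * X + C (r ^ 2 - Q w)) ^ 2 ^ (Module.finrank K M - 1) :=
  clifford_vector_charpoly_general Q hdim r w v hv hvr
end

section
/- Let M be a real vector space and Q : QuadraticForm ℝ M a negative definite quadratic form, i.e. Q m < 0 for every m ≠ 0. Then for every a in the multiplicative submonoid Submonoid.closure (Set.range (ι Q)) of CliffordAlgebra Q generated by the vectors ι(m), there exists r : ℝ with 0 ≤ r, a * reverse (involute a) = algebraMap ℝ (CliffordAlgebra Q) r, and r = 0 ↔ a = 0. -/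
theorem clifford_norm_nonneg_scalar_on_monoid {M : Type*} [AddCommGroup M] [Module ℝ M]
    (Q : QuadraticForm ℝ M) (hQ : ∀ m : M, m ≠ 0 → Q m < 0)
    (a : CliffordAlgebra Q)
    (ha : a ∈ Submonoid.closure (Set.range (CliffordAlgebra.ι Q))) :
    ∃ r : ℝ, 0 ≤ r ∧
      a * CliffordAlgebra.reverse (CliffordAlgebra.involute a) =
        algebraMap ℝ (CliffordAlgebra Q) r ∧
      (r = 0 ↔ a = 0) := by
  have hinj : Function.Injective (algebraMap ℝ (CliffordAlgebra Q)) :=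
    (algebraMap ℝ (CliffordAlgebra Q)).injective
  induction ha using Submonoid.closure_induction with
  | mem x hx =>
    obtain ⟨m, rfl⟩ := hx
    refine ⟨-Q m, ?_, ?_, ?_⟩
    · rcases eq_or_ne m 0 with rfl | hm
      · simp
      · linarith [hQ m hm]
    · rw [CliffordAlgebra.involute_ι, map_neg, CliffordAlgebra.reverse_ι, mul_neg,
        CliffordAlgebra.ι_sq_scalar, map_neg]
    · constructor
      · intro h
        rcases eq_or_ne m 0 with rfl | hm
        · simp
        · exact absurd (neg_eq_zero.mp h) (ne_of_lt (hQ m hm))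
      · intro h
        have : CliffordAlgebra.ι Q m * CliffordAlgebra.ι Q m = 0 := by rw [h, mul_zero]
        rw [CliffordAlgebra.ι_sq_scalar] at this
        have hQm : Q m = 0 := hinj (by simpa using this)
        simp [hQm]
  | one =>
    exact ⟨1, zero_le_one, by simp, by simp⟩
  | mul x y hx hy ihx ihy =>
    obtain ⟨r, hr0, hr, hr0iff⟩ := ihx
    obtain ⟨s, hs0, hs, hs0iff⟩ := ihy
    have key : x * y * CliffordAlgebra.reverse (CliffordAlgebra.involute (x * y)) =
        algebraMap ℝ (CliffordAlgebra Q) (r * s) := by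
      have hrv : CliffordAlgebra.reverse (CliffordAlgebra.involute (x * y)) =
          CliffordAlgebra.reverse (CliffordAlgebra.involute y) *
            CliffordAlgebra.reverse (CliffordAlgebra.involute x) := by
        rw [map_mul, CliffordAlgebra.reverse.map_mul]
      rw [hrv, mul_assoc, ← mul_assoc y, hs, Algebra.algebraMap_eq_smul_one, smul_mul_assoc,
        one_mul, mul_smul_comm, hr, map_mul, Algebra.smul_def, ← map_mul, ← map_mul,
        mul_comm s r]
    refine ⟨r * s, mul_nonneg hr0 hs0, key, ?_, ?_⟩
    · intro h
      rcases mul_eq_zero.mp h with h | h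
      · rw [hr0iff.mp h, zero_mul]
      · rw [hs0iff.mp h, mul_zero]
    · intro h
      have : algebraMap ℝ (CliffordAlgebra Q) (r * s) = 0 := by rw [← key, h, zero_mul]
      exact hinj (by simpa using this)
end

section
/- Let R be a commutative ring, M an R-module, Q : QuadraticForm R M, and a, b, c, d, x, y : CliffordAlgebra Q. Assume reverse y = y, reverse c * a = reverse a * c, reverse b * d = reverse d * b, reverse d * a - reverse b * c = 1, reverse a * d - reverse c * b = 1, and that c*x + d and c*y + d are units of CliffordAlgebra Q. Then (a*x + b) * Ring.inverse (c*x + d) - reverse ((a*y + b) * Ring.inverse (c*y + d)) = Ring.inverse (reverse (c*y + d)) * (x - y) * Ring.inverse (c*x + d). -/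
theorem ahlfors_magic_formula {R M : Type*} [CommRing R] [AddCommGroup M] [Module R M]
    {Q : QuadraticForm R M} (a b c d x y : CliffordAlgebra Q)
    (hy : CliffordAlgebra.reverse y = y)
    (h1 : CliffordAlgebra.reverse c * a = CliffordAlgebra.reverse a * c)
    (h2 : CliffordAlgebra.reverse b * d = CliffordAlgebra.reverse d * b)
    (h3 : CliffordAlgebra.reverse d * a - CliffordAlgebra.reverse b * c = 1)
    (h4 : CliffordAlgebra.reverse a * d - CliffordAlgebra.reverse c * b = 1)
    (hux : IsUnit (c * x + d)) (huy : IsUnit (c * y + d)) :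
    (a * x + b) * Ring.inverse (c * x + d)
        - CliffordAlgebra.reverse ((a * y + b) * Ring.inverse (c * y + d))
      = Ring.inverse (CliffordAlgebra.reverse (c * y + d)) * (x - y)
          * Ring.inverse (c * x + d) := by
  open CliffordAlgebra in
  have hry : IsUnit (reverse (Q := Q) (c * y + d)) := by
    have := (huy.map (reverseOp (Q := Q)))
    rw [show reverseOp (Q := Q) (c * y + d) = MulOpposite.op (reverse (c * y + d)) from
      (op_reverse _).symm, isUnit_op] at this
    exact this
  have hrevinv : reverse (Q := Q) (Ring.inverse (c * y + d))
      = Ring.inverse (reverse (Q := Q) (c * y + d)) := by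
    refine left_inv_eq_right_inv ?_ (Ring.mul_inverse_cancel _ hry)
    rw [← reverse.map_mul, Ring.mul_inverse_cancel _ huy, reverse.map_one]
  have K : reverse (Q := Q) (c * y + d) * (a * x + b)
      - reverse (Q := Q) (a * y + b) * (c * x + d) = x - y := by
    have expand : reverse (Q := Q) (c * y + d) * (a * x + b)
        - reverse (Q := Q) (a * y + b) * (c * x + d)
        = y * (reverse c * a - reverse a * c) * x
          + (reverse d * a - reverse b * c) * x
          - y * (reverse a * d - reverse c * b)
          + (reverse d * b - reverse b * d) := by
      simp only [map_add, reverse.map_mul, hy]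
      noncomm_ring
    rw [expand, h1, h2, h3, h4]
    noncomm_ring
  have hgoal : Ring.inverse (reverse (Q := Q) (c * y + d)) * (x - y)
      * Ring.inverse (c * x + d)
      = (a * x + b) * Ring.inverse (c * x + d)
        - Ring.inverse (reverse (Q := Q) (c * y + d)) * reverse (a * y + b) := by
    rw [← K]
    have e1 : Ring.inverse (reverse (Q := Q) (c * y + d)) * reverse (c * y + d) = 1 :=
      Ring.inverse_mul_cancel _ hry
    have e2 : (c * x + d) * Ring.inverse (c * x + d) = 1 :=
      Ring.mul_inverse_cancel _ hux
    calc Ring.inverse (reverse (Q := Q) (c * y + d))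
          * (reverse (c * y + d) * (a * x + b) - reverse (a * y + b) * (c * x + d))
          * Ring.inverse (c * x + d)
        = (Ring.inverse (reverse (Q := Q) (c * y + d)) * reverse (c * y + d))
            * ((a * x + b) * Ring.inverse (c * x + d))
          - Ring.inverse (reverse (Q := Q) (c * y + d)) * reverse (a * y + b)
            * ((c * x + d) * Ring.inverse (c * x + d)) := by noncomm_ring
      _ = _ := by rw [e1, e2, one_mul, mul_one]
  rw [hgoal, reverse.map_mul, hrevinv]
end

section
/- Let M be a real vector space, Q : QuadraticForm ℝ M a negative definite quadratic form (Q m < 0 for every m ≠ 0), and let Vec := LinearMap.range (Algebra.linearMap ℝ (CliffordAlgebra Q)) ⊔ LinearMap.range (ι Q). Say that x : CliffordAlgebra Q lies in the Clifford monoid if x * reverse (involute x) ∈ Set.range (algebraMap ℝ (CliffordAlgebra Q)) and x * v * reverse x ∈ Vec for every v ∈ Vec. Suppose a, b, c, d lie in the Clifford monoid, a * reverse b ∈ Vec, d * reverse c ∈ Vec, and a * reverse d - b * reverse c = algebraMap ℝ (CliffordAlgebra Q) δ for some δ ≠ 0. Then in Matrix (Fin 2) (Fin 2) (CliffordAlgebra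 Q) one has !![a, b; c, d] * !![reverse d, -reverse b; -reverse c, reverse a] = δ • 1 and !![reverse d, -reverse b; -reverse c, reverse a] * !![a, b; c, d] = δ • 1; in particular δ⁻¹ • !![reverse d, -reverse b; -reverse c, reverse a] is a two-sided inverse of !![a, b; c, d]. -/
/-- The submodule of Clifford vectors (paravectors): scalars plus the image of `ι`. -/
noncomputable def cliffordVec {M : Type*} [AddCommGroup M] [Module ℝ M]
    (Q : QuadraticForm ℝ M) : Submodule ℝ (CliffordAlgebra Q) :=
  LinearMap.range (Algebra.linearMap ℝ (CliffordAlgebra Q)) ⊔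
    LinearMap.range (CliffordAlgebra.ι Q)

/-- Membership in the Clifford monoid: the Clifford norm `x * x̄` is a scalar, and
conjugation `v ↦ x * v * reverse x` preserves the Clifford vectors. -/
def cliffordMonoidMem {M : Type*} [AddCommGroup M] [Module ℝ M]
    (Q : QuadraticForm ℝ M) (x : CliffordAlgebra Q) : Prop :=
  x * CliffordAlgebra.reverse (CliffordAlgebra.involute x) ∈
      Set.range (algebraMap ℝ (CliffordAlgebra Q)) ∧
  ∀ v ∈ cliffordVec Q, x * v * CliffordAlgebra.reverse x ∈ cliffordVec Q

namespace GL2CliffordAux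

open CliffordAlgebra

variable {M : Type*} [AddCommGroup M] [Module ℝ M]

/-- A filtration-like family of finite-dimensional submodules of the Clifford algebra. -/
noncomputable def clfP (Q : QuadraticForm ℝ M) : List M → Submodule ℝ (CliffordAlgebra Q)
  | [] => 1
  | m :: L => clfP Q L ⊔ Submodule.map (LinearMap.mulRight ℝ (ι Q m)) (clfP Q L)

variable (Q : QuadraticForm ℝ M)

lemma clfP_nil : clfP Q [] = 1 := rfl

lemma clfP_cons (m : M) (L : List M) :
    clfP Q (m :: L) = clfP Q L ⊔ Submodule.map (LinearMap.mulRight ℝ (ι Q m)) (clfP Q L) := rfl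

lemma clfP_le_cons (m : M) (L : List M) : clfP Q L ≤ clfP Q (m :: L) := le_sup_left

lemma clfP_mono_cons (m : M) {L L' : List M} (h : clfP Q L ≤ clfP Q L') :
    clfP Q (m :: L) ≤ clfP Q (m :: L') :=
  sup_le_sup h (Submodule.map_mono h)

lemma clfP_nil_le (L : List M) : clfP Q [] ≤ clfP Q L := by
  induction L with
  | nil => exact le_rfl
  | cons m L ih => exact ih.trans (clfP_le_cons Q m L)

lemma clfP_le_append_left (L₁ L₂ : List M) : clfP Q L₁ ≤ clfP Q (L₁ ++ L₂) := by
  induction L₁ with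
  | nil => exact clfP_nil_le Q L₂
  | cons m L ih => exact clfP_mono_cons Q m ih

lemma clfP_le_append_right (L₁ L₂ : List M) : clfP Q L₂ ≤ clfP Q (L₁ ++ L₂) := by
  induction L₁ with
  | nil => exact le_rfl
  | cons m L ih => exact ih.trans (clfP_le_cons Q m _)

lemma clfP_one_mem (L : List M) : (1 : CliffordAlgebra Q) ∈ clfP Q L :=
  clfP_nil_le Q L (by rw [clfP_nil]; exact Submodule.mem_one.mpr ⟨1, map_one _⟩)

lemma mem_clfP_cons {m : M} {L : List M} {u w : CliffordAlgebra Q}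
    (hu : u ∈ clfP Q L) (hw : w ∈ clfP Q L) :
    u + w * ι Q m ∈ clfP Q (m :: L) := by
  rw [clfP_cons]
  exact Submodule.add_mem _ (Submodule.mem_sup_left hu)
    (Submodule.mem_sup_right ⟨w, hw, by simp⟩)

lemma mem_clfP_cons' {m : M} {L : List M} {w : CliffordAlgebra Q} (hw : w ∈ clfP Q L) :
    w * ι Q m ∈ clfP Q (m :: L) := by
  simpa using mem_clfP_cons Q (Submodule.zero_mem _) hw

lemma clfP_cons_elim {m : M} {L : List M} {x : CliffordAlgebra Q}
    (hx : x ∈ clfP Q (m :: L)) :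
    ∃ u w, u ∈ clfP Q L ∧ w ∈ clfP Q L ∧ x = u + w * ι Q m := by
  rw [clfP_cons] at hx
  obtain ⟨u, hu, z, hz, rfl⟩ := Submodule.mem_sup.mp hx
  obtain ⟨w, hw, rfl⟩ := hz
  exact ⟨u, w, hu, hw, by simp⟩

lemma mul_algebraMap_eq_smul (x : CliffordAlgebra Q) (r : ℝ) :
    x * algebraMap ℝ (CliffordAlgebra Q) r = r • x :=
  ((Algebra.smul_def r x).trans (Algebra.commutes r x)).symm

lemma clfP_ι_mul (m : M) {L : List M} {x : CliffordAlgebra Q} (hx : x ∈ clfP Q L) :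
    ι Q m * x ∈ clfP Q (m :: L) := by
  induction L generalizing x with
  | nil =>
    rw [clfP_nil] at hx
    obtain ⟨r, rfl⟩ := Submodule.mem_one.mp hx
    have h : ι Q m * algebraMap ℝ (CliffordAlgebra Q) r
        = 0 + algebraMap ℝ (CliffordAlgebra Q) r * ι Q m := by
      rw [zero_add, Algebra.commutes]
    rw [h]
    exact mem_clfP_cons Q (Submodule.zero_mem _) hx
  | cons n L ih =>
    obtain ⟨u, w, hu, hw, rfl⟩ := clfP_cons_elim Q hx
    obtain ⟨u₁, w₁, hu₁, hw₁, hu'⟩ := clfP_cons_elim Q (ih hu)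
    obtain ⟨p, q, hp, hq, hpq⟩ := clfP_cons_elim Q (ih hw)
    have key : ι Q m * (u + w * ι Q n)
        = (u₁ + (p * ι Q n + q * algebraMap ℝ (CliffordAlgebra Q) (QuadraticMap.polar Q m n)))
          + (w₁ - q * ι Q n) * ι Q m := by
      rw [mul_add, ← mul_assoc (ι Q m) w, hu', hpq, add_mul p, mul_assoc q, ι_mul_ι_comm]
      noncomm_ring
    rw [key]
    refine mem_clfP_cons Q ?_ ?_
    · refine Submodule.add_mem _ (clfP_le_cons Q n L hu₁) (Submodule.add_mem _ ?_ ?_)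
      · exact mem_clfP_cons' Q hp
      · rw [mul_algebraMap_eq_smul]
        exact clfP_le_cons Q n L (Submodule.smul_mem _ _ hq)
    · exact Submodule.sub_mem _ (clfP_le_cons Q n L hw₁) (mem_clfP_cons' Q hq)

lemma clfP_mul {L : List M} {x y : CliffordAlgebra Q}
    (hx : x ∈ clfP Q L) (hy : y ∈ clfP Q L) : x * y ∈ clfP Q L := by
  induction L generalizing x y with
  | nil =>
    rw [clfP_nil] at hx hy ⊢
    obtain ⟨r, rfl⟩ := Submodule.mem_one.mp hx
    obtain ⟨s, rfl⟩ := Submodule.mem_one.mp hy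
    exact Submodule.mem_one.mpr ⟨r * s, (map_mul _ _ _)⟩
  | cons m L ih =>
    obtain ⟨x₁, x₂, hx₁, hx₂, rfl⟩ := clfP_cons_elim Q hx
    obtain ⟨y₁, y₂, hy₁, hy₂, rfl⟩ := clfP_cons_elim Q hy
    obtain ⟨u, w, hu, hw, huw⟩ := clfP_cons_elim Q (clfP_ι_mul Q m hy₁)
    obtain ⟨u', w', hu', hw', huw'⟩ := clfP_cons_elim Q (clfP_ι_mul Q m hy₂)
    have e1 : x₂ * ι Q m * y₁ = x₂ * u + x₂ * (w * ι Q m) := by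
      rw [mul_assoc, huw, mul_add]
    have e2 : x₂ * ι Q m * (y₂ * ι Q m)
        = x₂ * u' * ι Q m + x₂ * (w' * algebraMap ℝ (CliffordAlgebra Q) (Q m)) := by
      rw [mul_assoc x₂, ← mul_assoc (ι Q m) y₂, huw', add_mul, mul_assoc w', ι_sq_scalar,
        mul_add, ← mul_assoc x₂ u']
    have key : (x₁ + x₂ * ι Q m) * (y₁ + y₂ * ι Q m)
        = (x₁ * y₁ + x₂ * u + x₂ * (w' * algebraMap ℝ (CliffordAlgebra Q) (Q m)))
          + (x₁ * y₂ + x₂ * w + x₂ * u') * ι Q m := by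
      rw [add_mul, mul_add, mul_add, e1, e2]
      noncomm_ring
    rw [key]
    have h5 : w' * algebraMap ℝ (CliffordAlgebra Q) (Q m) ∈ clfP Q L := by
      rw [mul_algebraMap_eq_smul]
      exact Submodule.smul_mem _ _ hw'
    refine mem_clfP_cons Q ?_ ?_
    · exact Submodule.add_mem _ (Submodule.add_mem _ (ih hx₁ hy₁) (ih hx₂ hu)) (ih hx₂ h5)
    · exact Submodule.add_mem _ (Submodule.add_mem _ (ih hx₁ hy₂) (ih hx₂ hw)) (ih hx₂ hu')

lemma clfP_fd (L : List M) : FiniteDimensional ℝ (clfP Q L) := by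
  induction L with
  | nil =>
    rw [clfP_nil, Submodule.one_eq_span]
    infer_instance
  | cons m L ih =>
    rw [clfP_cons]
    haveI := ih
    infer_instance

lemma clfP_exists (x : CliffordAlgebra Q) : ∃ L, x ∈ clfP Q L := by
  induction x using CliffordAlgebra.induction with
  | algebraMap r => exact ⟨[], by rw [clfP_nil]; exact Submodule.mem_one.mpr ⟨r, rfl⟩⟩
  | ι m => exact ⟨[m], by simpa using mem_clfP_cons' Q (clfP_one_mem Q [])⟩
  | mul x y hx hy =>
    obtain ⟨L₁, h₁⟩ := hx
    obtain ⟨L₂, h₂⟩ := hy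
    exact ⟨L₁ ++ L₂, clfP_mul Q (clfP_le_append_left Q L₁ L₂ h₁)
      (clfP_le_append_right Q L₁ L₂ h₂)⟩
  | add x y hx hy =>
    obtain ⟨L₁, h₁⟩ := hx
    obtain ⟨L₂, h₂⟩ := hy
    exact ⟨L₁ ++ L₂, Submodule.add_mem _ (clfP_le_append_left Q L₁ L₂ h₁)
      (clfP_le_append_right Q L₁ L₂ h₂)⟩

lemma clfP_exists_list (xs : List (CliffordAlgebra Q)) :
    ∃ L, ∀ x ∈ xs, x ∈ clfP Q L := by
  induction xs with
  | nil => exact ⟨[], by simp⟩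
  | cons z zs ih =>
    obtain ⟨L₀, h₀⟩ := ih
    obtain ⟨L₁, h₁⟩ := clfP_exists Q z
    refine ⟨L₁ ++ L₀, ?_⟩
    intro x hx
    rcases List.mem_cons.mp hx with rfl | hmem
    · exact clfP_le_append_left Q L₁ L₀ h₁
    · exact clfP_le_append_right Q L₁ L₀ (h₀ x hmem)

/-- In a finite-dimensional algebra, a right inverse is a left inverse. -/
lemma mul_eq_one_comm_of_fd {A : Type*} [Ring A] [Algebra ℝ A] [FiniteDimensional ℝ A]
    {x y : A} (h : x * y = 1) : y * x = 1 := by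
  have hinj : Function.Injective (LinearMap.mulLeft ℝ y) := by
    intro u v huv
    simp only [LinearMap.mulLeft_apply] at huv
    calc u = x * y * u := by rw [h, one_mul]
    _ = x * (y * u) := by rw [mul_assoc]
    _ = x * (y * v) := by rw [huv]
    _ = x * y * v := by rw [mul_assoc]
    _ = v := by rw [h, one_mul]
  obtain ⟨z, hz⟩ := (LinearMap.injective_iff_surjective.mp hinj) 1
  simp only [LinearMap.mulLeft_apply] at hz
  have hxz : x = z := by rw [← mul_one x, ← hz, ← mul_assoc, h, one_mul]
  rw [hxz]
  exact hz

set_option maxHeartbeats 2000000 in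
set_option synthInstance.maxHeartbeats 1000000 in
lemma clf_matrix_mul_eq_one_comm {X Y : Matrix (Fin 2) (Fin 2) (CliffordAlgebra Q)}
    (h : X * Y = 1) : Y * X = 1 := by
  obtain ⟨L, hL⟩ := clfP_exists_list Q
    [X 0 0, X 0 1, X 1 0, X 1 1, Y 0 0, Y 0 1, Y 1 0, Y 1 1]
  have hX : ∀ i j, X i j ∈ clfP Q L := by
    intro i j
    fin_cases i <;> fin_cases j <;> exact hL _ (by simp)
  have hY : ∀ i j, Y i j ∈ clfP Q L := by
    intro i j
    fin_cases i <;> fin_cases j <;> exact hL _ (by simp)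
  set S : Subalgebra ℝ (CliffordAlgebra Q) :=
    (clfP Q L).toSubalgebra (clfP_one_mem Q L) (fun x y hx hy => clfP_mul Q hx hy) with hS
  haveI : FiniteDimensional ℝ S := clfP_fd Q L
  let X₀ : Matrix (Fin 2) (Fin 2) S := Matrix.of fun i j => (⟨X i j, hX i j⟩ : S)
  let Y₀ : Matrix (Fin 2) (Fin 2) S := Matrix.of fun i j => (⟨Y i j, hY i j⟩ : S)
  have hmapX : (AlgHom.mapMatrix (m := Fin 2) S.val) X₀ = X := by
    ext i j; rfl
  have hmapY : (AlgHom.mapMatrix (m := Fin 2) S.val) Y₀ = Y := by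
    ext i j; rfl
  have hinj : Function.Injective (AlgHom.mapMatrix (m := Fin 2) S.val) := by
    intro A B hAB
    simp only [AlgHom.mapMatrix_apply] at hAB
    exact Matrix.map_injective Subtype.val_injective hAB
  have h₁ : X₀ * Y₀ = 1 := by
    apply hinj
    rw [map_mul, hmapX, hmapY, h, map_one]
  have h₂ : Y₀ * X₀ = 1 := mul_eq_one_comm_of_fd h₁
  calc Y * X = (AlgHom.mapMatrix (m := Fin 2) S.val) (Y₀ * X₀) := by
        rw [map_mul, hmapX, hmapY]
  _ = 1 := by rw [h₂, map_one]

lemma rev_fixed {Q : QuadraticForm ℝ M} {v : CliffordAlgebra Q}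
    (hv : v ∈ cliffordVec Q) : reverse v = v := by
  obtain ⟨y, hy, z, hz, rfl⟩ := Submodule.mem_sup.mp hv
  obtain ⟨r, rfl⟩ := hy
  obtain ⟨m, rfl⟩ := hz
  simp [reverse_ι]

end GL2CliffordAux

open CliffordAlgebra GL2CliffordAux
theorem gl2_clifford_adjugate_inverse {M : Type*} [AddCommGroup M] [Module ℝ M]
    (Q : QuadraticForm ℝ M) (hQ : ∀ m : M, m ≠ 0 → Q m < 0)
    (a b c d : CliffordAlgebra Q)
    (hA : cliffordMonoidMem Q a) (hB : cliffordMonoidMem Q b)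
    (hC : cliffordMonoidMem Q c) (hD : cliffordMonoidMem Q d)
    (hab : a * CliffordAlgebra.reverse b ∈ cliffordVec Q)
    (hdc : d * CliffordAlgebra.reverse c ∈ cliffordVec Q)
    (δ : ℝ) (hδ : δ ≠ 0)
    (hdet : a * CliffordAlgebra.reverse d - b * CliffordAlgebra.reverse c
      = algebraMap ℝ (CliffordAlgebra Q) δ) :
    !![a, b; c, d] * !![CliffordAlgebra.reverse d, -CliffordAlgebra.reverse b;
          -CliffordAlgebra.reverse c, CliffordAlgebra.reverse a]
        = δ • (1 : Matrix (Fin 2) (Fin 2) (CliffordAlgebra Q)) ∧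
    !![CliffordAlgebra.reverse d, -CliffordAlgebra.reverse b;
          -CliffordAlgebra.reverse c, CliffordAlgebra.reverse a] * !![a, b; c, d]
        = δ • (1 : Matrix (Fin 2) (Fin 2) (CliffordAlgebra Q)) ∧
    !![a, b; c, d] * (δ⁻¹ • !![CliffordAlgebra.reverse d, -CliffordAlgebra.reverse b;
          -CliffordAlgebra.reverse c, CliffordAlgebra.reverse a]) = 1 ∧
    (δ⁻¹ • !![CliffordAlgebra.reverse d, -CliffordAlgebra.reverse b;
          -CliffordAlgebra.reverse c, CliffordAlgebra.reverse a]) * !![a, b; c, d] = 1 := by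
  have F1 : b * reverse a = a * reverse b := by
    have h := rev_fixed hab
    rwa [reverse.map_mul, reverse_reverse] at h
  have F2 : c * reverse d = d * reverse c := by
    have h := rev_fixed hdc
    rwa [reverse.map_mul, reverse_reverse] at h
  have F3 : d * reverse a - c * reverse b = algebraMap ℝ (CliffordAlgebra Q) δ := by
    have h := congrArg (reverse (Q := Q)) hdet
    rwa [map_sub, reverse.map_mul, reverse.map_mul, reverse_reverse, reverse_reverse,
      reverse.commutes] at h
  have G1 : !![a, b; c, d] * !![reverse d, -reverse b; -reverse c, reverse a]
      = δ • (1 : Matrix (Fin 2) (Fin 2) (CliffordAlgebra Q)) := by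
    ext i j
    fin_cases i <;> fin_cases j <;>
      simp [Matrix.mul_apply, Fin.sum_univ_two, Matrix.one_apply]
    · rw [← sub_eq_add_neg, hdet, Algebra.algebraMap_eq_smul_one]
    · rw [← F1]; exact neg_add_cancel _
    · rw [F2]; exact add_neg_cancel _
    · rw [neg_add_eq_sub, F3, Algebra.algebraMap_eq_smul_one]
  have G3 : !![a, b; c, d] * (δ⁻¹ • !![reverse d, -reverse b; -reverse c, reverse a]) = 1 := by
    rw [Matrix.mul_smul, G1, smul_smul, inv_mul_cancel₀ hδ, one_smul]
  have G4 : (δ⁻¹ • !![reverse d, -reverse b; -reverse c, reverse a]) * !![a, b; c, d] = 1 :=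
    clf_matrix_mul_eq_one_comm Q G3
  have G2 : !![reverse d, -reverse b; -reverse c, reverse a] * !![a, b; c, d]
      = δ • (1 : Matrix (Fin 2) (Fin 2) (CliffordAlgebra Q)) := by
    have h5 : δ • ((δ⁻¹ • !![reverse d, -reverse b; -reverse c, reverse a]) * !![a, b; c, d])
        = δ • (1 : Matrix (Fin 2) (Fin 2) (CliffordAlgebra Q)) := by rw [G4]
    rwa [Matrix.smul_mul, smul_smul, mul_inv_cancel₀ hδ, one_smul] at h5
  exact ⟨G1, G2, G3, G4⟩
end

section
/- Let R be a commutative ring, V an R-module with a quadratic form Q₂ : QuadraticForm R V, let α, β, γ : R, and let Q₁ : QuadraticForm R (R × R) be a binary quadratic form with Q₁ (1,0) = α, Q₁ (0,1) = γ, and Q₁ (1,1) = α + β + γ. Set δ := β^2 - 4*α*γ and assume IsUnit δ. Then there exists an R-algebra isomorphism CliffordAlgebra (Q₁.prod Q₂) ≃ₐ[R] TensorProduct R (CliffordAlgebra Q₁) (CliffordAlgebra (δ • Q₂)), where the tensor product is the ordinary (ungraded) tensor product of R-algebras. -/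
/-!
Let `ω` be an even element of `Cl(Q₁)` anticommuting with `U` and with `ω² = δ` a unit; for the
binary form take `ω = e₁e₂ - e₂e₁`, whose square is the discriminant. Then
`(u, v) ↦ u ⊗ 1 + δ⁻¹ ω ⊗ v` squares to `Q₁ u + Q₂ v` in `Cl(Q₁) ⊗ Cl(δ Q₂)`, because `ω ⊗ v`
anticommutes with `u ⊗ 1` and squares to `δ² Q₂ v`. Conversely `Cl(Q₁)` embeds into
`Cl(Q₁ ⊕ Q₂)`, and `v ↦ ω v` squares to `δ Q₂ v` there and commutes with `U`, since `ω` and `v`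
both anticommute with `U` while the even `ω` commutes with `v`. The two maps are inverse on
generators.
-/

open scoped TensorProduct

theorem commute_mul_of_anticommute {A : Type*} [Ring A] {x y z : A}
    (hy : x * y = -(y * x)) (hz : x * z = -(z * x)) : Commute x (y * z) := by
  rw [Commute, SemiconjBy, ← mul_assoc, hy, neg_mul, mul_assoc, hz, mul_neg, neg_neg, mul_assoc]

section Commutator

variable {R A : Type*} [CommRing R] [Ring A] [Algebra R A] {a b : A}

theorem mul_commutator_of_mul_self_left {α : R} (ha : a * a = algebraMap R A α) :
    a * (a * b - b * a) = -((a * b - b * a) * a) := by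
  have h : a * (a * b - b * a) + (a * b - b * a) * a = a * a * b - b * (a * a) := by noncomm_ring
  rw [ha, Algebra.commutes, sub_self] at h
  exact eq_neg_of_add_eq_zero_left h

theorem mul_commutator_of_mul_self_right {γ : R} (hb : b * b = algebraMap R A γ) :
    b * (a * b - b * a) = -((a * b - b * a) * b) := by
  have h : b * (a * b - b * a) + (a * b - b * a) * b = a * (b * b) - b * b * a := by noncomm_ring
  rw [hb, Algebra.commutes, sub_self] at h
  exact eq_neg_of_add_eq_zero_left h

theorem commutator_mul_self {α β γ : R} (ha : a * a = algebraMap R A α)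
    (hb : b * b = algebraMap R A γ) (hab : a * b + b * a = algebraMap R A β) :
    (a * b - b * a) * (a * b - b * a) = algebraMap R A (β ^ 2 - 4 * α * γ) := by
  have hab_ba : a * b * (b * a) = algebraMap R A (α * γ) := by
    rw [mul_assoc, ← mul_assoc b, hb, Algebra.left_comm, ha, ← map_mul, mul_comm]
  have hba_ab : b * a * (a * b) = algebraMap R A (α * γ) := by
    rw [mul_assoc, ← mul_assoc a, ha, Algebra.left_comm, hb, ← map_mul]
  calc (a * b - b * a) * (a * b - b * a)
      = (a * b + b * a) * (a * b + b * a) - 2 * (a * b * (b * a)) - 2 * (b * a * (a * b)) := by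
        noncomm_ring
    _ = algebraMap R A (β ^ 2 - 4 * α * γ) := by
        rw [hab, hab_ba, hba_ab, ← map_ofNat (algebraMap R A) 2, ← map_mul, ← map_mul, ← map_sub,
          ← map_sub]
        congr 1
        ring

end Commutator

namespace CliffordAlgebra

open TensorProduct

variable {R : Type*} [CommRing R]

theorem commute_of_forall_commute_ι {M B : Type*} [AddCommGroup M] [Module R M] [Ring B]
    [Algebra R B] {Q : QuadraticForm R M} (φ : CliffordAlgebra Q →ₐ[R] B) {b : B}
    (h : ∀ m, Commute (φ (ι Q m)) b) (x : CliffordAlgebra Q) : Commute (φ x) b := by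
  induction x using CliffordAlgebra.induction with
  | algebraMap r => rw [AlgHom.commutes]; exact Algebra.commute_algebraMap_left r b
  | ι m => exact h m
  | mul x y hx hy => rw [map_mul]; exact hx.mul_left hy
  | add x y hx hy => rw [map_add]; exact hx.add_left hy

section ProdEquivTensor

variable {U V : Type*} [AddCommGroup U] [Module R U] [AddCommGroup V] [Module R V]
  {Q₁ : QuadraticForm R U} (Q₂ : QuadraticForm R V) {δ : R} {ω : CliffordAlgebra Q₁}
  (hδ : IsUnit δ) (hω_even : ω ∈ evenOdd Q₁ 0) (hω : ω * ω = algebraMap R _ δ)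
  (hanti : ∀ u, ι Q₁ u * ω = -(ω * ι Q₁ u))

variable (ω) in
noncomputable def prodToTensorLinear :
    U × V →ₗ[R] CliffordAlgebra Q₁ ⊗[R] CliffordAlgebra (δ • Q₂) :=
  (Algebra.TensorProduct.includeLeft : CliffordAlgebra Q₁ →ₐ[R] _).toLinearMap ∘ₗ ι Q₁ ∘ₗ
      LinearMap.fst R U V +
    (↑hδ.unit⁻¹ : R) • (TensorProduct.mk R _ _ ω ∘ₗ ι (δ • Q₂) ∘ₗ LinearMap.snd R U V)

theorem prodToTensorLinear_apply (m : U × V) :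
    prodToTensorLinear Q₂ ω hδ m = ι Q₁ m.1 ⊗ₜ 1 + (↑hδ.unit⁻¹ : R) • (ω ⊗ₜ ι (δ • Q₂) m.2) :=
  rfl

theorem prodToTensorLinear_mul_self (hω : ω * ω = algebraMap R _ δ)
    (hanti : ∀ u, ι Q₁ u * ω = -(ω * ι Q₁ u)) (m : U × V) :
    prodToTensorLinear Q₂ ω hδ m * prodToTensorLinear Q₂ ω hδ m =
      algebraMap R _ (Q₁.prod Q₂ m) := by
  obtain ⟨u, v⟩ := m
  rw [prodToTensorLinear_apply]
  set c : R := ↑hδ.unit⁻¹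
  set x : CliffordAlgebra Q₁ ⊗[R] CliffordAlgebra (δ • Q₂) := ι Q₁ u ⊗ₜ 1
  set y : CliffordAlgebra Q₁ ⊗[R] CliffordAlgebra (δ • Q₂) := ω ⊗ₜ ι (δ • Q₂) v
  have hxx : x * x = algebraMap R _ (Q₁ u) := by
    rw [Algebra.TensorProduct.tmul_mul_tmul, ι_sq_scalar, mul_one,
      Algebra.TensorProduct.algebraMap_apply]
  have hxy : x * y + y * x = 0 := by
    rw [Algebra.TensorProduct.tmul_mul_tmul, Algebra.TensorProduct.tmul_mul_tmul, one_mul,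
      mul_one, ← add_tmul, hanti, neg_add_cancel, zero_tmul]
  have hyy : y * y = algebraMap R _ (δ * (δ * Q₂ v)) := by
    rw [Algebra.TensorProduct.tmul_mul_tmul, hω, ι_sq_scalar, Algebra.algebraMap_eq_smul_one,
      Algebra.algebraMap_eq_smul_one, smul_tmul_smul, smul_apply, smul_eq_mul,
      Algebra.algebraMap_eq_smul_one, Algebra.TensorProduct.one_def]
  have hc : c * δ = 1 := hδ.val_inv_mul
  calc (x + c • y) * (x + c • y) = x * x + c • (x * y + y * x) + (c * c) • (y * y) := by
        simp only [add_mul, mul_add, smul_mul_assoc, mul_smul_comm, smul_smul, smul_add]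
        abel
    _ = algebraMap R _ (Q₁ u + Q₂ v) := by
        rw [hxx, hxy, hyy, smul_zero, add_zero, Algebra.smul_def, ← map_mul, ← map_add]
        congr 1
        linear_combination (Q₂ v * (c * δ + 1)) * hc

noncomputable def prodToTensor :
    CliffordAlgebra (Q₁.prod Q₂) →ₐ[R] CliffordAlgebra Q₁ ⊗[R] CliffordAlgebra (δ • Q₂) :=
  lift _ ⟨prodToTensorLinear Q₂ ω hδ, prodToTensorLinear_mul_self Q₂ hδ hω hanti⟩

theorem prodToTensor_ι (m : U × V) :
    prodToTensor Q₂ hδ hω hanti (ι _ m) =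
      ι Q₁ m.1 ⊗ₜ 1 + (↑hδ.unit⁻¹ : R) • (ω ⊗ₜ ι (δ • Q₂) m.2) :=
  lift_ι_apply _ _ _

theorem prodToTensor_map_inl (x : CliffordAlgebra Q₁) :
    prodToTensor Q₂ hδ hω hanti (map (.inl Q₁ Q₂) x) = x ⊗ₜ 1 := by
  suffices (prodToTensor Q₂ hδ hω hanti).comp (map (.inl Q₁ Q₂)) =
      Algebra.TensorProduct.includeLeft from AlgHom.congr_fun this x
  refine hom_ext (LinearMap.ext fun u => ?_)
  simp only [LinearMap.comp_apply, AlgHom.toLinearMap_apply, AlgHom.comp_apply]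
  rw [map_apply_ι, QuadraticMap.Isometry.inl_apply, prodToTensor_ι, map_zero, tmul_zero,
    smul_zero, add_zero, Algebra.TensorProduct.includeLeft_apply]

noncomputable def volumeMulInr : CliffordAlgebra (δ • Q₂) →ₐ[R] CliffordAlgebra (Q₁.prod Q₂) :=
  lift _ ⟨LinearMap.mulLeft R (map (.inl Q₁ Q₂) ω) ∘ₗ ι _ ∘ₗ LinearMap.inr R U V, fun v => by
    have hcomm : Commute (map (.inl Q₁ Q₂) ω) (ι _ (0, v)) := by
      simpa [map_apply_ι] using commute_map_mul_map_of_isOrtho_of_mem_evenOdd_zero_left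
        (.inl Q₁ Q₂) (.inr Q₁ Q₂) QuadraticMap.IsOrtho.inl_inr ω (ι Q₂ v) hω_even
        (ι_mem_evenOdd_one Q₂ v)
    simp only [LinearMap.comp_apply, LinearMap.mulLeft_apply, LinearMap.inr_apply]
    rw [hcomm.symm.mul_mul_mul_comm, ← map_mul, hω, AlgHom.commutes, ι_sq_scalar,
      QuadraticMap.prod_apply, map_zero, zero_add, ← map_mul, smul_apply, smul_eq_mul]⟩

theorem volumeMulInr_ι (v : V) :
    volumeMulInr Q₂ hω_even hω (ι _ v) = map (.inl Q₁ Q₂) ω * ι _ (0, v) :=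
  lift_ι_apply _ _ _

noncomputable def tensorToProd :
    CliffordAlgebra Q₁ ⊗[R] CliffordAlgebra (δ • Q₂) →ₐ[R] CliffordAlgebra (Q₁.prod Q₂) :=
  Algebra.TensorProduct.lift (map (.inl Q₁ Q₂)) (volumeMulInr Q₂ hω_even hω) fun x y => by
    have hι : ∀ u v,
        Commute (map (.inl Q₁ Q₂) (ι Q₁ u)) (volumeMulInr Q₂ hω_even hω (ι _ v)) := by
      intro u v
      rw [volumeMulInr_ι, map_apply_ι, QuadraticMap.Isometry.inl_apply]
      refine commute_mul_of_anticommute ?_ (ι_mul_ι_comm_of_isOrtho (.inl_inr u v))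
      simpa [map_apply_ι] using congrArg (map (.inl Q₁ Q₂)) (hanti u)
    exact commute_of_forall_commute_ι _ (fun u =>
      (commute_of_forall_commute_ι _ (fun v => (hι u v).symm) y).symm) x

theorem tensorToProd_tmul (x : CliffordAlgebra Q₁) (y : CliffordAlgebra (δ • Q₂)) :
    tensorToProd Q₂ hω_even hω hanti (x ⊗ₜ y) =
      map (.inl Q₁ Q₂) x * volumeMulInr Q₂ hω_even hω y :=
  Algebra.TensorProduct.lift_tmul _ _ _ _ _

theorem tensorToProd_comp_prodToTensor :
    (tensorToProd Q₂ hω_even hω hanti).comp (prodToTensor Q₂ hδ hω hanti) = AlgHom.id R _ := by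
  refine hom_ext (LinearMap.ext fun ⟨u, v⟩ => ?_)
  have hc : (↑hδ.unit⁻¹ : R) * δ = 1 := hδ.val_inv_mul
  simp only [LinearMap.comp_apply, AlgHom.toLinearMap_apply, AlgHom.comp_apply, AlgHom.id_apply]
  rw [prodToTensor_ι, map_add, map_smul, tensorToProd_tmul, tensorToProd_tmul, map_one, mul_one,
    volumeMulInr_ι, ← mul_assoc, ← map_mul, hω, AlgHom.commutes, ← Algebra.smul_def, smul_smul,
    hc, one_smul, map_apply_ι, QuadraticMap.Isometry.inl_apply, ← map_add, Prod.mk_add_mk,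
    add_zero, zero_add]

theorem prodToTensor_comp_tensorToProd :
    (prodToTensor Q₂ hδ hω hanti).comp (tensorToProd Q₂ hω_even hω hanti) = AlgHom.id R _ := by
  have hc : (↑hδ.unit⁻¹ : R) * δ = 1 := hδ.val_inv_mul
  refine Algebra.TensorProduct.ext ?_ ?_
  · refine hom_ext (LinearMap.ext fun u => ?_)
    simp only [LinearMap.comp_apply, AlgHom.toLinearMap_apply, AlgHom.comp_apply,
      Algebra.TensorProduct.includeLeft_apply, AlgHom.id_apply]
    rw [tensorToProd_tmul, map_one, mul_one, prodToTensor_map_inl]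
  · refine hom_ext (LinearMap.ext fun v => ?_)
    simp only [LinearMap.comp_apply, AlgHom.toLinearMap_apply, AlgHom.comp_apply,
      Algebra.TensorProduct.includeRight_apply, AlgHom.id_apply, AlgHom.restrictScalars_apply]
    rw [tensorToProd_tmul, map_one, one_mul, volumeMulInr_ι, map_mul, prodToTensor_map_inl,
      prodToTensor_ι, map_zero, zero_tmul, zero_add, mul_smul_comm,
      Algebra.TensorProduct.tmul_mul_tmul, one_mul, hω, Algebra.algebraMap_eq_smul_one,
      smul_tmul', smul_smul, hc, one_smul]

noncomputable def prodEquivTensor :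
    CliffordAlgebra (Q₁.prod Q₂) ≃ₐ[R] CliffordAlgebra Q₁ ⊗[R] CliffordAlgebra (δ • Q₂) :=
  AlgEquiv.ofAlgHom (prodToTensor Q₂ hδ hω hanti) (tensorToProd Q₂ hω_even hω hanti)
    (prodToTensor_comp_tensorToProd Q₂ hδ hω_even hω hanti)
    (tensorToProd_comp_prodToTensor Q₂ hδ hω_even hω hanti)

end ProdEquivTensor

section Binary

variable (Q : QuadraticForm R (R × R))

noncomputable def binaryVolume : CliffordAlgebra Q :=
  ι Q (1, 0) * ι Q (0, 1) - ι Q (0, 1) * ι Q (1, 0)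

theorem binaryVolume_mem_evenOdd_zero : binaryVolume Q ∈ evenOdd Q 0 :=
  sub_mem (ι_mul_ι_mem_evenOdd_zero Q _ _) (ι_mul_ι_mem_evenOdd_zero Q _ _)

theorem binaryVolume_mul_self : binaryVolume Q * binaryVolume Q =
    algebraMap R _ (QuadraticMap.polar Q (1, 0) (0, 1) ^ 2 - 4 * Q (1, 0) * Q (0, 1)) :=
  commutator_mul_self (ι_sq_scalar _ _) (ι_sq_scalar _ _) (ι_mul_ι_add_swap _ _)

theorem ι_mul_binaryVolume (u : R × R) : ι Q u * binaryVolume Q = -(binaryVolume Q * ι Q u) := by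
  have hu : u = u.1 • (1, 0) + u.2 • (0, 1) := by ext <;> simp
  rw [hu, map_add, map_smul, map_smul, add_mul, mul_add, smul_mul_assoc, smul_mul_assoc,
    mul_smul_comm, mul_smul_comm, binaryVolume,
    mul_commutator_of_mul_self_left (ι_sq_scalar _ _),
    mul_commutator_of_mul_self_right (ι_sq_scalar _ _),
    smul_neg, smul_neg, neg_add]

end Binary

end CliffordAlgebra

open CliffordAlgebra in
theorem clifford_decomposition_lemma {R V : Type*} [CommRing R] [AddCommGroup V] [Module R V]
    (Q₂ : QuadraticForm R V) (α β γ : R)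
    (Q₁ : QuadraticForm R (R × R))
    (h10 : Q₁ (1, 0) = α) (h01 : Q₁ (0, 1) = γ) (h11 : Q₁ (1, 1) = α + β + γ)
    (hδ : IsUnit (β ^ 2 - 4 * α * γ)) :
    Nonempty (CliffordAlgebra (Q₁.prod Q₂) ≃ₐ[R]
      TensorProduct R (CliffordAlgebra Q₁) (CliffordAlgebra ((β ^ 2 - 4 * α * γ) • Q₂))) := by
  have hβ : QuadraticMap.polar Q₁ (1, 0) (0, 1) = β := by
    rw [QuadraticMap.polar, Prod.mk_add_mk, add_zero, zero_add, h10, h01, h11]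
    ring
  have hω : binaryVolume Q₁ * binaryVolume Q₁ = algebraMap R _ (β ^ 2 - 4 * α * γ) := by
    rw [binaryVolume_mul_self, hβ, h10, h01]
  exact ⟨prodEquivTensor Q₂ hδ (binaryVolume_mem_evenOdd_zero Q₁) hω (ι_mul_binaryVolume Q₁)⟩
end

section
/- Let R be a commutative ring, M an R-module, Q : QuadraticForm R M, and let N : QuadraticForm R R be the form with N t = -t^2 for all t. Write e := ι (Q.prod N) (0, 1) in CliffordAlgebra (Q.prod N), so that e*e = -1. Then there exists an R-algebra isomorphism φ from CliffordAlgebra Q onto the even subalgebra CliffordAlgebra.even (Q.prod N) such that, as elements of CliffordAlgebra (Q.prod N): φ (ι Q m) = ι (Q.prod N) (m, 0) * e for every m : M; φ (involute v) = -(e * φ v * e) for every v : CliffordAlgebra Q; and φ (reverse (involute v)) = reverse (φ v) for every v : CliffordAlgebra Q. -/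
set_option synthInstance.maxHeartbeats 400000 in
set_option maxHeartbeats 1600000 in
theorem first_bott_periodicity {R M : Type*} [CommRing R] [AddCommGroup M] [Module R M]
    (Q : QuadraticForm R M) (N : QuadraticForm R R) (hN : ∀ t : R, N t = -t ^ 2) :
    CliffordAlgebra.ι (Q.prod N) ((0 : M), (1 : R)) *
        CliffordAlgebra.ι (Q.prod N) ((0 : M), (1 : R)) = -1 ∧
    ∃ φ : CliffordAlgebra Q ≃ₐ[R] CliffordAlgebra.even (Q.prod N),
      (∀ m : M, (φ (CliffordAlgebra.ι Q m) : CliffordAlgebra (Q.prod N)) =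
          CliffordAlgebra.ι (Q.prod N) (m, (0 : R)) *
            CliffordAlgebra.ι (Q.prod N) ((0 : M), (1 : R))) ∧
      (∀ v : CliffordAlgebra Q,
        (φ (CliffordAlgebra.involute v) : CliffordAlgebra (Q.prod N)) =
          -(CliffordAlgebra.ι (Q.prod N) ((0 : M), (1 : R)) *
              (φ v : CliffordAlgebra (Q.prod N)) *
              CliffordAlgebra.ι (Q.prod N) ((0 : M), (1 : R)))) ∧
      (∀ v : CliffordAlgebra Q,
        (φ (CliffordAlgebra.reverse (CliffordAlgebra.involute v)) :
            CliffordAlgebra (Q.prod N)) =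
          CliffordAlgebra.reverse ((φ v : CliffordAlgebra (Q.prod N)))) := by
  open CliffordAlgebra CliffordAlgebra.EquivEven in
  have hNeq : N = -QuadraticMap.sq := QuadraticMap.ext fun t => by
    rw [hN]; simp [QuadraticMap.sq_apply]; ring
  subst hNeq
  refine ⟨e0_mul_e0 Q, (involuteEquiv (Q := Q)).trans (equivEven Q), ?_, ?_, ?_⟩
  · intro m
    show ((toEven Q (involute (ι Q m)) : even (Q' Q)) : CliffordAlgebra (Q' Q)) = _
    rw [involute_ι, map_neg]
    push_cast [toEven_ι]
    rw [neg_e0_mul_v]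
    rfl
  · intro v
    show ((toEven Q (involute (involute v)) : even (Q' Q)) : CliffordAlgebra (Q' Q)) =
      -(e0 Q * (toEven Q (involute v) : CliffordAlgebra (Q' Q)) * e0 Q)
    rw [involute_involute]
    induction v using CliffordAlgebra.induction with
    | algebraMap r =>
        simp only [AlgHom.commutes, Subalgebra.coe_algebraMap]
        rw [← Algebra.commutes, mul_assoc, e0_mul_e0, mul_neg_one, neg_neg]
    | ι m =>
        simp only [involute_ι, map_neg, Subalgebra.coe_neg, toEven_ι, mul_neg, neg_mul, neg_neg]
        rw [← mul_assoc, e0_mul_e0, neg_one_mul, neg_mul, ← neg_e0_mul_v, neg_neg]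
    | mul x y hx hy =>
        simp only [map_mul, Subalgebra.coe_mul]
        rw [hx, hy, neg_mul_neg]
        simp only [mul_assoc]
        rw [← mul_assoc (e0 Q) (e0 Q), e0_mul_e0, neg_one_mul]
        simp [mul_assoc, mul_neg]
    | add x y hx hy =>
        simp only [map_add, Subalgebra.coe_add, hx, hy, mul_add, add_mul, neg_add]
  · intro v
    show ((toEven Q (involute (reverse (involute v))) : even (Q' Q)) : CliffordAlgebra (Q' Q)) =
      reverse ((toEven Q (involute v) : CliffordAlgebra (Q' Q)))
    rw [← reverse_involute]
    exact coe_toEven_reverse_involute Q (involute v)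
end

section
/- Let M be a finite-dimensional ℚ-vector space and Q : QuadraticForm ℚ M a negative definite quadratic form (Q m < 0 for every m ≠ 0). Let x be an element of the multiplicative submonoid Submonoid.closure (Set.range (ι Q)) of CliffordAlgebra Q such that x is integral over ℤ and there exists y : CliffordAlgebra Q, also integral over ℤ, with x * y = 1 and y * x = 1. Then x * reverse (involute x) = 1. -/
/-!
Clifford conjugation `x̄ = reverse (involute x)` is Mathlib's `star` on `CliffordAlgebra`.
A product of vectors `x = ι m₁ ⋯ ι mₖ` has Clifford norm `x * x̄ = ∏ (-Q mᵢ)`, a nonnegative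
rational scalar `c` when `Q` is negative definite. If `x` is a unit of an order, then `x̄ = c • x⁻¹`
and `x⁻¹ * x⁻¹‾ = c⁻¹`; both norms are products of commuting integral elements, so `c` and `c⁻¹`
are rational integers, which forces `c = 1`.
-/

open CliffordAlgebra Polynomial

theorem Polynomial.star_aeval {R A : Type*} [CommRing R] [StarRing R] [TrivialStar R] [Ring A]
    [StarRing A] [Algebra R A] [StarModule R A] (x : A) (p : R[X]) :
    star (aeval x p) = aeval (star x) p := by
  induction p using Polynomial.induction_on' with
  | add p q hp hq => rw [map_add, map_add, star_add, hp, hq]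
  | monomial n r =>
    rw [aeval_monomial, aeval_monomial, star_mul, star_pow, ← algebraMap_star_comm,
      star_trivial r, Algebra.commutes]

theorem IsIntegral.star {R A : Type*} [CommRing R] [StarRing R] [TrivialStar R] [Ring A]
    [StarRing A] [Algebra R A] [StarModule R A] {x : A} (hx : IsIntegral R x) :
    IsIntegral R (Star.star x) := by
  obtain ⟨p, hp, hpx⟩ := hx
  refine ⟨p, hp, ?_⟩
  rw [← aeval_def, ← star_aeval, aeval_def, hpx, star_zero]

theorem IsIntegral.mul_of_commute {R A : Type*} [CommRing R] [Ring A] [Algebra R A] {a b : A}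
    (ha : IsIntegral R a) (hb : IsIntegral R b) (hab : Commute a b) : IsIntegral R (a * b) := by
  set S := Algebra.adjoin R ({a, b} : Set A)
  have : IsMulCommutative S := Algebra.isMulCommutative_adjoin R <| by
    rintro x (rfl | rfl) y (rfl | rfl)
    exacts [rfl, hab, hab.symm, rfl]
  have integral_in_S {z : A} (hzS : z ∈ S) (hz : IsIntegral R z) : IsIntegral R (⟨z, hzS⟩ : S) :=
    (isIntegral_algHom_iff S.val Subtype.val_injective).mp hz
  have haS : a ∈ S := Algebra.subset_adjoin (by simp)
  have hbS : b ∈ S := Algebra.subset_adjoin (by simp)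
  open scoped IsMulCommutative in
  exact (isIntegral_algHom_iff S.val Subtype.val_injective).mpr
    ((integral_in_S haS ha).mul (integral_in_S hbS hb))

theorem commute_of_mul_eq_algebraMap {R A : Type*} [CommSemiring R] [Semiring A] [Algebra R A]
    {u v w : A} {r : R} (hvu : v * u = 1) (h : u * w = algebraMap R A r) : Commute u w :=
  calc u * w = algebraMap R A r * (v * u) := by rw [hvu, mul_one, h]
    _ = v * (u * w) * u := by rw [h, ← mul_assoc, Algebra.commutes, mul_assoc]
    _ = w * u := by rw [← mul_assoc, hvu, one_mul]

theorem Rat.eq_one_of_isIntegral_of_isIntegral_inv {c : ℚ} (hc : IsIntegral ℤ c)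
    (hc_inv : IsIntegral ℤ c⁻¹) (hc_pos : 0 < c) : c = 1 := by
  obtain ⟨n, rfl⟩ := IsIntegrallyClosed.isIntegral_iff.mp hc
  obtain ⟨m, hm⟩ := IsIntegrallyClosed.isIntegral_iff.mp hc_inv
  simp only [eq_intCast, Int.cast_pos] at hm hc_pos ⊢
  have hnm : n * m = 1 := by
    have : (n : ℚ) * m = 1 := by rw [hm, mul_inv_cancel₀ (by positivity)]
    exact_mod_cast this
  simp [Int.eq_one_of_mul_eq_one_right hc_pos.le hnm]

theorem mul_star_eq_one_of_isIntegral {A : Type*} [Ring A] [Algebra ℚ A] [StarRing A] {x y : A}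
    (hx : IsIntegral ℤ x) (hy : IsIntegral ℤ y) (hxy : x * y = 1) (hyx : y * x = 1) {c : ℚ}
    (hc_nonneg : 0 ≤ c) (hc : x * star x = algebraMap ℚ A c) : x * star x = 1 := by
  rcases subsingleton_or_nontrivial A with _ | _
  · exact Subsingleton.elim _ _
  have hc' : star x * x = algebraMap ℚ A c := (commute_of_mul_eq_algebraMap hyx hc).symm.eq.trans hc
  -- `star y` is the inverse of `star x`, so the norm of `y` inverts the norm `c` of `x`.
  have hy_left : y * star y * algebraMap ℚ A c = 1 := by
    rw [← hc', mul_assoc, ← mul_assoc (star y), ← star_mul, hxy, star_one, one_mul, hyx]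
  have hy_right : star y * y * algebraMap ℚ A c = 1 := by
    rw [← hc, mul_assoc, ← mul_assoc y, hyx, one_mul, ← star_mul, hxy, star_one]
  have hc_ne : c ≠ 0 := by
    rintro rfl
    simp at hy_left
  have hc_inv : algebraMap ℚ A c * algebraMap ℚ A c⁻¹ = 1 := by
    rw [← map_mul, mul_inv_cancel₀ hc_ne, map_one]
  have hy_norm : y * star y = algebraMap ℚ A c⁻¹ := left_inv_eq_right_inv hy_left hc_inv
  have hy_norm' : star y * y = algebraMap ℚ A c⁻¹ := left_inv_eq_right_inv hy_right hc_inv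
  have scalar_integral {a : A} {r : ℚ} (ha : IsIntegral ℤ a) (hcomm : Commute a (star a))
      (h : a * star a = algebraMap ℚ A r) : IsIntegral ℤ r :=
    (isIntegral_algebraMap_iff (algebraMap ℚ A).injective).mp (h ▸ ha.mul_of_commute ha.star hcomm)
  have hc_one : c = 1 := Rat.eq_one_of_isIntegral_of_isIntegral_inv
    (scalar_integral hx (hc.trans hc'.symm) hc)
    (scalar_integral hy (hy_norm.trans hy_norm'.symm) hy_norm) (hc_nonneg.lt_of_ne' hc_ne)
  rw [hc, hc_one, map_one]

theorem CliffordAlgebra.exists_nonneg_mul_star_eq_algebraMap {R M : Type*} [CommRing R]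
    [PartialOrder R] [IsOrderedRing R] [AddCommGroup M] [Module R M] {Q : QuadraticForm R M}
    (hQ : ∀ m, Q m ≤ 0) {x : CliffordAlgebra Q}
    (hx : x ∈ Submonoid.closure (Set.range (ι Q))) :
    ∃ c : R, 0 ≤ c ∧ x * star x = algebraMap R _ c := by
  induction hx using Submonoid.closure_induction with
  | mem _ hv =>
    obtain ⟨m, rfl⟩ := hv
    exact ⟨-Q m, neg_nonneg.mpr (hQ m), by rw [star_ι, mul_neg, ι_sq_scalar, map_neg]⟩
  | one => exact ⟨1, zero_le_one, by simp⟩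
  | mul a b _ _ ha hb =>
    obtain ⟨c, hc_nonneg, hc⟩ := ha
    obtain ⟨d, hd_nonneg, hd⟩ := hb
    refine ⟨c * d, mul_nonneg hc_nonneg hd_nonneg, ?_⟩
    rw [star_mul, mul_assoc, ← mul_assoc b, hd, Algebra.commutes, ← mul_assoc, hc, map_mul]

theorem clifford_unit_of_order_has_norm_one_general {M : Type*} [AddCommGroup M] [Module ℚ M]
    (Q : QuadraticForm ℚ M) (hQ : ∀ m : M, m ≠ 0 → Q m < 0)
    (x : CliffordAlgebra Q)
    (hx : x ∈ Submonoid.closure (Set.range (CliffordAlgebra.ι Q)))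
    (hxint : IsIntegral ℤ x)
    (hunit : ∃ y : CliffordAlgebra Q, IsIntegral ℤ y ∧ x * y = 1 ∧ y * x = 1) :
    x * CliffordAlgebra.reverse (CliffordAlgebra.involute x) = 1 := by
  obtain ⟨y, hyint, hxy, hyx⟩ := hunit
  have hQ_nonpos : ∀ m, Q m ≤ 0 := fun m => by
    rcases eq_or_ne m 0 with rfl | hm
    · simp
    · exact (hQ m hm).le
  obtain ⟨c, hc_nonneg, hc⟩ := exists_nonneg_mul_star_eq_algebraMap hQ_nonpos hx
  exact mul_star_eq_one_of_isIntegral hxint hyint hxy hyx hc_nonneg hc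

theorem clifford_unit_of_order_has_norm_one {M : Type*} [AddCommGroup M] [Module ℚ M]
    [FiniteDimensional ℚ M]
    (Q : QuadraticForm ℚ M) (hQ : ∀ m : M, m ≠ 0 → Q m < 0)
    (x : CliffordAlgebra Q)
    (hx : x ∈ Submonoid.closure (Set.range (CliffordAlgebra.ι Q)))
    (hxint : IsIntegral ℤ x)
    (hunit : ∃ y : CliffordAlgebra Q, IsIntegral ℤ y ∧ x * y = 1 ∧ y * x = 1) :
    x * CliffordAlgebra.reverse (CliffordAlgebra.involute x) = 1 :=
  clifford_unit_of_order_has_norm_one_general Q hQ x hx hxint hunit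
end

section
/- Let R be a commutative integral domain with fraction field K := FractionRing R, let A be a ring that is a finite-dimensional K-algebra (with the R-action induced via K), and let 𝒪 be a subring of A that is full in A: for every a : A there exists r : R with r ≠ 0 and r • a ∈ 𝒪. Then for every x ∈ 𝒪, there exists y ∈ 𝒪 with y ≠ 0 and x * y = 0 if and only if there exists y ∈ 𝒪 with y ≠ 0 and y * x = 0. -/
/-- In a finite-dimensional algebra over a field, left zero-divisors are
right zero-divisors and conversely. -/
lemma exists_left_zero_divisor_iff_exists_right {K : Type*} [Field K] {A : Type*} [Ring A]
    [Algebra K A] [FiniteDimensional K A] (x : A) :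
    (∃ y : A, y ≠ 0 ∧ x * y = 0) ↔ (∃ z : A, z ≠ 0 ∧ z * x = 0) := by
  constructor
  · rintro ⟨y, hy, hxy⟩
    by_contra h
    push_neg at h
    have hinj : Function.Injective (LinearMap.mulRight K x) := by
      intro a b hab
      have : (a - b) * x = 0 := by
        simpa [sub_mul, sub_eq_zero] using congrArg (· - b * x) (by simpa using hab)
      by_contra hne
      exact h (a - b) (sub_ne_zero.mpr (fun e => hne (by rw [e]))) this
    have hsurj : Function.Surjective (LinearMap.mulRight K x) :=
      LinearMap.injective_iff_surjective.mp hinj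
    obtain ⟨v, hv⟩ := hsurj 1
    have hv' : v * x = 1 := by simpa using hv
    have : y = 0 := by
      calc y = (v * x) * y := by rw [hv', one_mul]
        _ = v * (x * y) := by rw [mul_assoc]
        _ = 0 := by rw [hxy, mul_zero]
    exact hy this
  · rintro ⟨z, hz, hzx⟩
    by_contra h
    push_neg at h
    have hinj : Function.Injective (LinearMap.mulLeft K x) := by
      intro a b hab
      have : x * (a - b) = 0 := by
        simpa [mul_sub, sub_eq_zero] using congrArg (· - x * b) (by simpa using hab)
      by_contra hne
      exact h (a - b) (sub_ne_zero.mpr (fun e => hne (by rw [e]))) this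
    have hsurj : Function.Surjective (LinearMap.mulLeft K x) :=
      LinearMap.injective_iff_surjective.mp hinj
    obtain ⟨u, hu⟩ := hsurj 1
    have hu' : x * u = 1 := by simpa using hu
    have : z = 0 := by
      calc z = z * (x * u) := by rw [hu', mul_one]
        _ = (z * x) * u := by rw [mul_assoc]
        _ = 0 := by rw [hzx, zero_mul]
    exact hz this

theorem left_zero_divisor_iff_right_zero_divisor_in_order
    {R : Type*} [CommRing R] [IsDomain R]
    {A : Type*} [Ring A] [Algebra (FractionRing R) A]
    [Module R A] [IsScalarTower R (FractionRing R) A]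
    [FiniteDimensional (FractionRing R) A]
    (𝒪 : Subring A)
    (hfull : ∀ a : A, ∃ r : R, r ≠ 0 ∧ r • a ∈ 𝒪)
    (x : A) (hx : x ∈ 𝒪) :
    (∃ y ∈ 𝒪, y ≠ 0 ∧ x * y = 0) ↔ (∃ y ∈ 𝒪, y ≠ 0 ∧ y * x = 0) := by
  set K := FractionRing R
  have smul_ne_zero' : ∀ (r : R) (a : A), r ≠ 0 → a ≠ 0 → r • a ≠ 0 := by
    intro r a hr ha
    have : r • a = (algebraMap R K r) • a := (algebraMap_smul K r a).symm
    rw [this]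
    exact smul_ne_zero (fun h => hr ((map_eq_zero_iff _
      (IsFractionRing.injective R K)).mp h)) ha
  constructor
  · rintro ⟨y, _, hy, hxy⟩
    obtain ⟨z, hz, hzx⟩ := (exists_left_zero_divisor_iff_exists_right (K := K) x).mp ⟨y, hy, hxy⟩
    obtain ⟨r, hr, hrz⟩ := hfull z
    refine ⟨r • z, hrz, smul_ne_zero' r z hr hz, ?_⟩
    rw [← algebraMap_smul K r z, smul_mul_assoc, hzx, smul_zero]
  · rintro ⟨z, _, hz, hzx⟩
    obtain ⟨y, hy, hxy⟩ := (exists_left_zero_divisor_iff_exists_right (K := K) x).mpr ⟨z, hz, hzx⟩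
    obtain ⟨r, hr, hry⟩ := hfull y
    refine ⟨r • y, hry, smul_ne_zero' r y hr hy, ?_⟩
    rw [← algebraMap_smul K r y, mul_smul_comm, hxy, smul_zero]
end

section
/- Let A be a (possibly noncommutative) ring and let S, S₁, S₂ be subrings of A with S ≤ S₁ and S ≤ S₂. Let n₁, n₂ be coprime natural numbers such that n₁ • a ∈ S for every a ∈ S₁ and n₂ • a ∈ S for every a ∈ S₂. Then for all a₁ ∈ S₁ and a₂ ∈ S₂, both a₁ * a₂ and a₂ * a₁ lie in the additive subgroup S₁.toAddSubgroup ⊔ S₂.toAddSubgroup; in particular the additive group S₁ + S₂ is closed under multiplication and is a subring of A. -/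
theorem sum_of_orders_with_coprime_indices_is_subring {A : Type*} [Ring A]
    (S S₁ S₂ : Subring A) (h1 : S ≤ S₁) (h2 : S ≤ S₂)
    (n₁ n₂ : ℕ) (hco : Nat.Coprime n₁ n₂)
    (hn1 : ∀ a ∈ S₁, n₁ • a ∈ S) (hn2 : ∀ a ∈ S₂, n₂ • a ∈ S) :
    (∀ a₁ ∈ S₁, ∀ a₂ ∈ S₂,
        a₁ * a₂ ∈ S₁.toAddSubgroup ⊔ S₂.toAddSubgroup ∧
        a₂ * a₁ ∈ S₁.toAddSubgroup ⊔ S₂.toAddSubgroup) ∧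
    (∀ z ∈ S₁.toAddSubgroup ⊔ S₂.toAddSubgroup,
      ∀ w ∈ S₁.toAddSubgroup ⊔ S₂.toAddSubgroup,
        z * w ∈ S₁.toAddSubgroup ⊔ S₂.toAddSubgroup) ∧
    ∃ T : Subring A, T.toAddSubgroup = S₁.toAddSubgroup ⊔ S₂.toAddSubgroup := by
  obtain ⟨u, v, huv⟩ := Nat.isCoprime_iff_coprime.mpr hco
  set G := S₁.toAddSubgroup ⊔ S₂.toAddSubgroup with hG
  have key : ∀ w : A, n₁ • w ∈ S₂ → n₂ • w ∈ S₁ → w ∈ G := by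
    intro w m1 m2
    have hx : u • (n₁ • w) + v • (n₂ • w) = w := by
      rw [← natCast_zsmul w n₁, ← natCast_zsmul w n₂, ← mul_smul, ← mul_smul,
        ← add_smul, huv, one_smul]
    rw [← hx]
    exact G.add_mem
      (G.zsmul_mem (AddSubgroup.mem_sup_right (m1 : _ ∈ S₂.toAddSubgroup)) u)
      (G.zsmul_mem (AddSubgroup.mem_sup_left (m2 : _ ∈ S₁.toAddSubgroup)) v)
  have part1 : ∀ a₁ ∈ S₁, ∀ a₂ ∈ S₂, a₁ * a₂ ∈ G ∧ a₂ * a₁ ∈ G := by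
    intro a₁ h₁ a₂ h₂
    constructor
    · exact key _ (by rw [← smul_mul_assoc]; exact S₂.mul_mem (h2 (hn1 a₁ h₁)) h₂)
        (by rw [← mul_smul_comm]; exact S₁.mul_mem h₁ (h1 (hn2 a₂ h₂)))
    · exact key _ (by rw [← mul_smul_comm]; exact S₂.mul_mem h₂ (h2 (hn1 a₁ h₁)))
        (by rw [← smul_mul_assoc]; exact S₁.mul_mem (h1 (hn2 a₂ h₂)) h₁)
  have part2 : ∀ z ∈ G, ∀ w ∈ G, z * w ∈ G := by
    intro z hz w hw
    rw [hG, AddSubgroup.mem_sup] at hz hw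
    obtain ⟨x₁, hx₁, y₁, hy₁, rfl⟩ := hz
    obtain ⟨x₂, hx₂, y₂, hy₂, rfl⟩ := hw
    have : (x₁ + y₁) * (x₂ + y₂) = x₁ * x₂ + x₁ * y₂ + y₁ * x₂ + y₁ * y₂ := by noncomm_ring
    rw [this]
    exact G.add_mem (G.add_mem (G.add_mem
      (AddSubgroup.mem_sup_left (S₁.mul_mem hx₁ hx₂ : _ ∈ S₁.toAddSubgroup))
      ((part1 x₁ hx₁ y₂ hy₂).1)) ((part1 x₂ hx₂ y₁ hy₁).2))
      (AddSubgroup.mem_sup_right (S₂.mul_mem hy₁ hy₂ : _ ∈ S₂.toAddSubgroup))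
  refine ⟨part1, part2, ⟨{ G with
    one_mem' := AddSubgroup.mem_sup_left (S₁.one_mem : (1:A) ∈ S₁.toAddSubgroup),
    mul_mem' := fun ha hb => part2 _ ha _ hb }, rfl⟩⟩
end

section
/- Let n : ℕ and let r₁, r₂ : ℝ with 0 ≤ r₁, 0 ≤ r₂, and r₁^2 + r₂^2 = n/4. Let a : EuclideanSpace ℝ (Fin n) satisfy 0 ≤ a j and a j ≤ 1/2 for every j, and let h : EuclideanSpace ℝ (Fin n) be the point all of whose coordinates equal 1/2. Then ‖a‖ ≤ r₁ or ‖a - h‖ ≤ r₂. -/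
theorem distance_lemma {n : ℕ} (r₁ r₂ : ℝ) (hr₁ : 0 ≤ r₁) (hr₂ : 0 ≤ r₂)
    (hsum : r₁ ^ 2 + r₂ ^ 2 = (n : ℝ) / 4)
    (a : EuclideanSpace ℝ (Fin n)) (ha0 : ∀ j, 0 ≤ a j) (ha1 : ∀ j, a j ≤ 1 / 2)
    (h : EuclideanSpace ℝ (Fin n)) (hh : ∀ j, h j = 1 / 2) :
    ‖a‖ ≤ r₁ ∨ ‖a - h‖ ≤ r₂ := by
  by_contra hc
  push_neg at hc
  obtain ⟨h1, h2⟩ := hc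
  have e1 : ‖a‖ ^ 2 = ∑ j, (a j) ^ 2 := by
    rw [EuclideanSpace.norm_eq, Real.sq_sqrt (by positivity)]
    simp [Real.norm_eq_abs, sq_abs]
  have e2 : ‖a - h‖ ^ 2 = ∑ j, (a j - 1 / 2) ^ 2 := by
    rw [EuclideanSpace.norm_eq, Real.sq_sqrt (by positivity)]
    simp [Real.norm_eq_abs, sq_abs, hh]
  have key : ‖a‖ ^ 2 + ‖a - h‖ ^ 2 ≤ (n : ℝ) / 4 := by
    rw [e1, e2, ← Finset.sum_add_distrib]
    calc ∑ j, ((a j) ^ 2 + (a j - 1 / 2) ^ 2) ≤ ∑ _j : Fin n, (1 / 4 : ℝ) := by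
          apply Finset.sum_le_sum
          intro j _
          nlinarith [ha0 j, ha1 j]
      _ = (n : ℝ) / 4 := by simp; ring
  have p1 : r₁ ^ 2 < ‖a‖ ^ 2 := by
    apply pow_lt_pow_left₀ h1 hr₁ (by norm_num)
  have p2 : r₂ ^ 2 < ‖a - h‖ ^ 2 := by
    apply pow_lt_pow_left₀ h2 hr₂ (by norm_num)
  linarith
end

section
/- Let n : ℕ, let P, Q : EuclideanSpace ℝ (Fin n), and let r, s : ℝ with 0 ≤ r and 0 ≤ s. Then the following are equivalent: (i) for every X : EuclideanSpace ℝ (Fin n) with dist Q X ≤ s one has s^2 - (dist Q X)^2 ≤ r^2 - (dist P X)^2; (ii) dist P Q + s ≤ r. -/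
theorem exclusion_lemma {n : ℕ} (P Q : EuclideanSpace ℝ (Fin n)) (r s : ℝ)
    (hr : 0 ≤ r) (hs : 0 ≤ s) :
    (∀ X : EuclideanSpace ℝ (Fin n), dist Q X ≤ s →
        s ^ 2 - dist Q X ^ 2 ≤ r ^ 2 - dist P X ^ 2) ↔ dist P Q + s ≤ r := by
  constructor
  · intro h
    by_cases hPQ : P = Q
    · subst hPQ
      have := h P (by simpa using hs)
      simp only [dist_self] at this ⊢
      nlinarith
    · set d := dist P Q with hd
      have hd0 : 0 < d := dist_pos.mpr hPQ
      set X : EuclideanSpace ℝ (Fin n) := Q + (s / d) • (Q - P) with hX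
      have hnorm : ‖Q - P‖ = d := by rw [hd, dist_eq_norm, norm_sub_rev]
      have hQX : dist Q X = s := by
        rw [hX, dist_eq_norm]
        have : Q - (Q + (s / d) • (Q - P)) = -((s / d) • (Q - P)) := by abel
        rw [this, norm_neg, norm_smul, hnorm]
        rw [Real.norm_eq_abs, abs_of_nonneg (by positivity)]
        field_simp
      have hPX : dist P X = d + s := by
        rw [hX, dist_eq_norm, norm_sub_rev]
        have : Q + (s / d) • (Q - P) - P = (1 + s / d) • (Q - P) := by
          rw [add_smul, one_smul]; abel
        rw [this, norm_smul, hnorm, Real.norm_eq_abs,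
          abs_of_nonneg (by positivity)]
        field_simp
      have := h X (le_of_eq hQX)
      rw [hQX, hPX] at this
      nlinarith
  · intro h X hX
    have h1 : dist P X ≤ dist P Q + dist Q X := dist_triangle P Q X
    have h2 : 0 ≤ dist Q X := dist_nonneg
    have h3 : 0 ≤ dist P Q := dist_nonneg
    have h4 : 0 ≤ dist P X := dist_nonneg
    nlinarith
end

section
/- Let G be a group acting transitively on a nonempty type S (MulAction.IsPretransitive G S), let H be a subgroup of G of finite index (H.index ≠ 0), let n : ℕ, and let x : Fin n → S be a system of representatives for the H-orbits on S, i.e. for every s : S there exists exactly one i : Fin n such that s lies in the H-orbit of x i (there is h ∈ H with h • x i = s). Then H.index = ∑ i, H.relindex (MulAction.stabilizer G (x i)); that is, the index of H in G equals the sum over i of the indices of H ⊓ Stab_G(x i) in Stab_G(x i). -/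
/-!
Fix `s₀ : S`; the fibres of `gH ↦ H • g⁻¹ • s₀` from `G ⧸ H` to the `H`-orbits on `S` partition
`G ⧸ H`. Translating by some `g` with `g • s₀ = x` carries the fibre over `H • x` to the fibre over
`H • x` of the same map with base point `x`, and that fibre is the image of `Stab(x)` in `G ⧸ H`,
i.e. `Stab(x) ⧸ (H ⊓ Stab(x))`.
-/

open Function

namespace MulAction

variable {G S : Type*} [Group G] [MulAction G S] (H : Subgroup G)

def cosetToOrbit (s : S) : G ⧸ H → orbitRel.Quotient H S :=
  Quotient.map' (fun g => g⁻¹ • s) fun a b hab =>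
    ⟨⟨a⁻¹ * b, QuotientGroup.leftRel_apply.mp hab⟩, by simp [mul_smul]⟩

@[simp]
theorem cosetToOrbit_mk (s : S) (g : G) :
    cosetToOrbit H s (g : G ⧸ H) = ⟦g⁻¹ • s⟧ :=
  rfl

theorem cosetToOrbit_smul (g : G) (s : S) (q : G ⧸ H) :
    cosetToOrbit H (g • s) (g • q) = cosetToOrbit H s q := by
  induction q using QuotientGroup.induction_on with
  | H g' => simp [mul_smul]

def fiberCosetToOrbitEquivOfSMulEq {g : G} {s t : S} (hgs : g • s = t)
    (o : orbitRel.Quotient H S) :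
    {q // cosetToOrbit H s q = o} ≃ {q // cosetToOrbit H t q = o} :=
  (toPerm g).subtypeEquiv fun q => by simp [← hgs, cosetToOrbit_smul]

def stabilizerQuotientToFiber (s : S) :
    stabilizer G s ⧸ H.subgroupOf (stabilizer G s) → {q // cosetToOrbit H s q = ⟦s⟧} :=
  fun q => ⟨Quotient.map' Subtype.val (fun _ _ hab => QuotientGroup.leftRel_apply.mpr
      (Subgroup.mem_subgroupOf.mp (QuotientGroup.leftRel_apply.mp hab))) q, by
    induction q using QuotientGroup.induction_on with
    | H k => simp [mem_stabilizer_iff.mp (inv_mem k.2)]⟩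

theorem bijective_stabilizerQuotientToFiber (s : S) :
    Bijective (stabilizerQuotientToFiber H s) := by
  constructor
  · rintro ⟨k⟩ ⟨k'⟩ hkk'
    have hkk' : ((k : G) : G ⧸ H) = (k' : G) := congrArg Subtype.val hkk'
    exact QuotientGroup.eq.mpr (Subgroup.mem_subgroupOf.mpr (QuotientGroup.eq.mp hkk'))
  · rintro ⟨⟨g⟩, hg⟩
    obtain ⟨⟨h, hh⟩, hgh : h • s = g⁻¹ • s⟩ := Quotient.exact' hg
    have hgh_mem : g * h ∈ stabilizer G s := by
      rw [mem_stabilizer_iff, mul_smul, hgh, smul_inv_smul]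
    refine ⟨QuotientGroup.mk ⟨g * h, hgh_mem⟩, Subtype.ext ?_⟩
    exact QuotientGroup.eq.mpr (by simpa using hh)

noncomputable def fiberCosetToOrbitEquivStabilizerQuotient (s : S) :
    {q // cosetToOrbit H s q = ⟦s⟧} ≃ stabilizer G s ⧸ H.subgroupOf (stabilizer G s) :=
  (Equiv.ofBijective _ (bijective_stabilizerQuotientToFiber H s)).symm

theorem bijective_orbitMk_of_existsUnique {ι : Type*} {x : ι → S}
    (hx : ∀ s : S, ∃! i, ∃ h ∈ H, h • x i = s) :
    Bijective fun i => (⟦x i⟧ : orbitRel.Quotient H S) := by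
  constructor
  · intro i j hij
    obtain ⟨⟨h, hh⟩, hhx⟩ := Quotient.exact hij
    exact (hx (x i)).unique ⟨1, H.one_mem, one_smul G _⟩ ⟨h, hh, hhx⟩
  · rintro ⟨s⟩
    obtain ⟨i, ⟨h, hh, rfl⟩, -⟩ := hx s
    exact ⟨i, (orbitRel.Quotient.quotient_smul_eq (g := (⟨h, hh⟩ : H))).symm⟩

noncomputable def quotientEquivSigmaStabilizerQuotient [IsPretransitive G S] (s₀ : S)
    {ι : Type*} {x : ι → S} (hx : Bijective fun i => (⟦x i⟧ : orbitRel.Quotient H S)) :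
    G ⧸ H ≃ Σ i, stabilizer G (x i) ⧸ H.subgroupOf (stabilizer G (x i)) :=
  (Equiv.sigmaFiberEquiv (cosetToOrbit H s₀)).symm.trans <|
    (Equiv.sigmaCongrLeft (Equiv.ofBijective _ hx)).symm.trans <|
      Equiv.sigmaCongrRight fun i =>
        (fiberCosetToOrbitEquivOfSMulEq H (exists_smul_eq G s₀ (x i)).choose_spec _).trans
          (fiberCosetToOrbitEquivStabilizerQuotient H (x i))

end MulAction

theorem index_eq_sum_of_stabilizer_relindices {G S : Type*} [Group G] [Nonempty S]
    [MulAction G S] [MulAction.IsPretransitive G S]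
    (H : Subgroup G) (hH : H.index ≠ 0)
    (n : ℕ) (x : Fin n → S)
    (hx : ∀ s : S, ∃! i : Fin n, ∃ h ∈ H, h • x i = s) :
    H.index = ∑ i, H.relIndex (MulAction.stabilizer G (x i)) := by
  have : H.FiniteIndex := ⟨hH⟩
  obtain ⟨s₀⟩ := ‹Nonempty S›
  rw [H.index_eq_card, Nat.card_congr (MulAction.quotientEquivSigmaStabilizerQuotient H s₀
    (MulAction.bijective_orbitMk_of_existsUnique H hx)), Nat.card_sigma]
  rfl
end

section
/- For all x, y : Quaternion ℤ with x ≠ 0 and (star x * y).imK = 0, there exist q, r : Quaternion ℤ with q.imK = 0, y = x * q + r, and Quaternion.normSq r < Quaternion.normSq x. -/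
/-! Since `star x * x = normSq x =: n`, dividing `y` by `x` amounts to approximating
`z = star x * y` by `n * q`: rounding the coordinates of `z / n` to the nearest integers gives a
Clifford vector `q` with every coordinate of `z - n * q` at most `n / 2` in absolute value, and
as `z` has no `k`-part, `normSq (z - n * q) ≤ 3 n² / 4 < n²`. Since
`z - n * q = star x * (y - x * q)` has norm `n * normSq (y - x * q)`, the remainder
`r = y - x * q` has norm less than `n`. -/

open Quaternion

theorem Int.exists_two_mul_abs_sub_mul_le (a : ℤ) {n : ℤ} (hn : 0 < n) :
    ∃ m : ℤ, 2 * |a - n * m| ≤ n := by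
  refine ⟨round ((a : ℚ) / n), ?_⟩
  have hn' : (0 : ℚ) < n := by exact_mod_cast hn
  have hsplit : (a : ℚ) - n * round ((a : ℚ) / n) = n * ((a : ℚ) / n - round ((a : ℚ) / n)) := by
    field_simp
  qify
  rw [hsplit, abs_mul, abs_of_pos hn']
  nlinarith [abs_sub_round ((a : ℚ) / n)]

theorem Quaternion.four_mul_normSq_le_of_imK_eq_zero {c : ℍ[ℤ]} {n : ℤ} (hc : c.imK = 0)
    (hre : 2 * |c.re| ≤ n) (hi : 2 * |c.imI| ≤ n) (hj : 2 * |c.imJ| ≤ n) :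
    4 * normSq c ≤ 3 * n ^ 2 := by
  have sq_le {t : ℤ} (ht : 2 * |t| ≤ n) : 4 * t ^ 2 ≤ n ^ 2 := by
    rw [← sq_abs t]
    nlinarith [abs_nonneg t]
  rw [normSq_def', hc]
  linarith [sq_le hre, sq_le hi, sq_le hj]

theorem Quaternion.exists_imK_eq_zero_normSq_sub_lt {z : ℍ[ℤ]} (hz : z.imK = 0) {n : ℤ}
    (hn : 0 < n) : ∃ q : ℍ[ℤ], q.imK = 0 ∧ normSq (z - n • q) < n ^ 2 := by
  obtain ⟨a, ha⟩ := Int.exists_two_mul_abs_sub_mul_le z.re hn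
  obtain ⟨b, hb⟩ := Int.exists_two_mul_abs_sub_mul_le z.imI hn
  obtain ⟨c, hc⟩ := Int.exists_two_mul_abs_sub_mul_le z.imJ hn
  let q : ℍ[ℤ] := ⟨a, b, c, 0⟩
  have hq : q.imK = 0 := rfl
  refine ⟨q, hq, ?_⟩
  have hle := four_mul_normSq_le_of_imK_eq_zero (c := z - n • q) (n := n)
    (by simp [hz, hq]) (by simpa using ha) (by simpa using hb) (by simpa using hc)
  linarith [pow_pos hn 2]

theorem lipschitz_order_clifford_euclidean (x y : Quaternion ℤ) (hx : x ≠ 0)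
    (hxy : (star x * y).imK = 0) :
    ∃ q r : Quaternion ℤ, q.imK = 0 ∧ y = x * q + r ∧
      Quaternion.normSq r < Quaternion.normSq x := by
  have hn : 0 < normSq x := normSq_nonneg.lt_of_ne' (normSq_ne_zero.mpr hx)
  obtain ⟨q, hq, hlt⟩ := exists_imK_eq_zero_normSq_sub_lt hxy hn
  refine ⟨q, y - x * q, hq, (add_sub_cancel _ _).symm, ?_⟩
  have hrem : star x * y - normSq x • q = star x * (y - x * q) := by
    rw [mul_sub, ← mul_assoc, star_mul_self, coe_mul_eq_smul]
  rw [hrem, map_mul, normSq_star, sq] at hlt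
  exact lt_of_mul_lt_mul_left hlt hn.le
end
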